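/- arXiv:1003.5000 — 6 statements merged into one kernel-verified Lean document; each statement's English description precedes it below -/
import Mathlib

section
/- Let s, r ≥ 0 and t ≤ min(s, r) be real numbers with s + r − t > 1/2. Then for all two-sided sequences a ∈ h^s(ℤ) and b ∈ h^r(ℤ) (weighted ℓ² spaces with weight (1+2|k|)^s, resp. (1+2|k|)^r), the convolution (a∗b)(k) = Σ_{j∈ℤ} a(k−j)b(j) converges absolutely for every k, a∗b belongs to h^t(ℤ), and there is a constant C depending only on s, r, t such that ‖a∗b‖_{h^t} ≤ C‖a‖_{h^s}‖b‖_{h^r}. -/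
open scoped BigOperators

/-- Membership in the weighted space `h^σ(ℤ)` with weight `(1+2|k|)^σ`. -/
def memH (σ : ℝ) (a : ℤ → ℂ) : Prop :=
  Summable fun k : ℤ => ((1 + 2 * |(k : ℝ)|) ^ σ) ^ 2 * ‖a k‖ ^ 2

/-- The norm of `h^σ(ℤ)`. -/
noncomputable def hNorm (σ : ℝ) (a : ℤ → ℂ) : ℝ :=
  Real.sqrt (∑' k : ℤ, ((1 + 2 * |(k : ℝ)|) ^ σ) ^ 2 * ‖a k‖ ^ 2)

/-- Convolution of two-sided sequences. -/
noncomputable def conv (a b : ℤ → ℂ) : ℤ → ℂ := fun k => ∑' j : ℤ, a (k - j) * b j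

/-!
Write `ρ k = 1 + 2|k|` and `q = s + r - t`. For `i + j = k`,
`ρ(k)^t ≤ 2^|t| ρ(i)^s ρ(j)^r (ρ(i)^(-q) + ρ(j)^(-q) + ρ(k)^(-q))`: whichever of `|i|, |j|, |k|`
is smallest, the other two weights agree up to a factor `2`, and `t ≤ min s r` lets the smallest
weight absorb the negative power. Each of the three resulting convolutions is bounded in `ℓ²` by
Cauchy–Schwarz against `∑ ρ^(-2q)`, which is finite exactly because `2q > 1`. All sums are taken
in `ℝ≥0∞`, so summability only has to be read off at the very end.
-/

open scoped ENNReal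

namespace ENNReal

theorem tsum_mul_sq_le_sq_mul_sq {ι : Type*} (f g : ι → ℝ≥0∞) :
    (∑' i, f i * g i) ^ 2 ≤ (∑' i, f i ^ 2) * ∑' i, g i ^ 2 := by
  let _ : MeasurableSpace ι := ⊤
  have h := lintegral_mul_le_Lp_mul_Lq MeasureTheory.Measure.count Real.HolderConjugate.two_two
    measurable_from_top.aemeasurable measurable_from_top.aemeasurable (f := f) (g := g)
  simp only [MeasureTheory.lintegral_count' measurable_from_top, rpow_two] at h
  calc (∑' i, f i * g i) ^ 2
      ≤ ((∑' i, f i ^ 2) ^ (1 / 2 : ℝ) * (∑' i, g i ^ 2) ^ (1 / 2 : ℝ)) ^ 2 := by gcongr; exact h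
    _ = (∑' i, f i ^ 2) * ∑' i, g i ^ 2 := by
      rw [mul_pow, ← rpow_mul_natCast, ← rpow_mul_natCast]; norm_num

theorem add_add_sq_le (a b c : ℝ≥0∞) : (a + b + c) ^ 2 ≤ 3 * (a ^ 2 + b ^ 2 + c ^ 2) := by
  rcases eq_or_ne a ⊤ with rfl | ha
  · simp
  rcases eq_or_ne b ⊤ with rfl | hb
  · simp
  rcases eq_or_ne c ⊤ with rfl | hc
  · simp
  lift a to NNReal using ha
  lift b to NNReal using hb
  lift c to NNReal using hc
  have h : (a + b + c) ^ 2 ≤ 3 * (a ^ 2 + b ^ 2 + c ^ 2) := by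
    rw [← NNReal.coe_le_coe]; push_cast
    nlinarith [sq_nonneg ((a : ℝ) - b), sq_nonneg ((b : ℝ) - c), sq_nonneg ((a : ℝ) - c)]
  exact_mod_cast h

end ENNReal

section Convolution

variable {G : Type*} [AddCommGroup G]

noncomputable def lconv (f g : G → ℝ≥0∞) (k : G) : ℝ≥0∞ := ∑' j, f (k - j) * g j

variable (ω f g : G → ℝ≥0∞)

theorem tsum_comp_sub_left (k : G) : ∑' j, f (k - j) = ∑' i, f i :=
  (Equiv.subLeft k).tsum_eq f

theorem lconv_comm : lconv f g = lconv g f := by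
  ext k
  rw [lconv, ← (Equiv.subLeft k).tsum_eq]
  simp [lconv, mul_comm]

theorem tsum_lconv : ∑' k, lconv f g k = (∑' i, f i) * ∑' j, g j := by
  simp_rw [lconv]
  rw [ENNReal.tsum_comm, ← ENNReal.tsum_mul_left]
  refine tsum_congr fun j => ?_
  rw [ENNReal.tsum_mul_right, ← (Equiv.subRight j).tsum_eq f]; rfl

theorem lconv_sq_le (k : G) : lconv f g k ^ 2 ≤ (∑' i, f i ^ 2) * ∑' j, g j ^ 2 := by
  simpa only [lconv, tsum_comp_sub_left (fun i => f i ^ 2)] using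
    ENNReal.tsum_mul_sq_le_sq_mul_sq (fun j => f (k - j)) g

theorem tsum_lconv_mul_sq_le :
    ∑' k, lconv (ω * f) g k ^ 2 ≤ (∑' i, ω i ^ 2) * (∑' i, f i ^ 2) * ∑' j, g j ^ 2 := by
  have pointwise (k : G) :
      lconv (ω * f) g k ^ 2 ≤ (∑' i, ω i ^ 2) * lconv (f ^ 2) (g ^ 2) k := by
    have := ENNReal.tsum_mul_sq_le_sq_mul_sq (fun j => ω (k - j)) (fun j => f (k - j) * g j)
    simp only [mul_pow, tsum_comp_sub_left (fun i => ω i ^ 2)] at this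
    simpa [lconv, mul_assoc] using this
  calc ∑' k, lconv (ω * f) g k ^ 2
      ≤ ∑' k, (∑' i, ω i ^ 2) * lconv (f ^ 2) (g ^ 2) k := ENNReal.tsum_le_tsum pointwise
    _ = _ := by rw [ENNReal.tsum_mul_left, tsum_lconv, mul_assoc]; rfl

theorem tsum_mul_lconv_sq_le :
    ∑' k, (ω k * lconv f g k) ^ 2 ≤ (∑' i, ω i ^ 2) * (∑' i, f i ^ 2) * ∑' j, g j ^ 2 := by
  calc ∑' k, (ω k * lconv f g k) ^ 2
      ≤ ∑' k, ω k ^ 2 * ((∑' i, f i ^ 2) * ∑' j, g j ^ 2) :=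
        ENNReal.tsum_le_tsum fun k => by rw [mul_pow]; gcongr; exact lconv_sq_le f g k
    _ = _ := by rw [ENNReal.tsum_mul_right, mul_assoc]

end Convolution

-- Reducible, so that `positivity` sees through it.
noncomputable abbrev bracket (k : ℤ) : ℝ := 1 + 2 * |(k : ℝ)|

theorem one_le_bracket (k : ℤ) : 1 ≤ bracket k := by
  unfold bracket; linarith [abs_nonneg (k : ℝ)]

theorem bracket_pos (k : ℤ) : 0 < bracket k := one_pos.trans_le (one_le_bracket k)

theorem bracket_le_bracket {i j : ℤ} (h : |i| ≤ |j|) : bracket i ≤ bracket j := by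
  have : |(i : ℝ)| ≤ |(j : ℝ)| := by exact_mod_cast h
  unfold bracket; linarith

theorem bracket_le_two_mul {i j : ℤ} (h : |i| ≤ 2 * |j|) : bracket i ≤ 2 * bracket j := by
  have : |(i : ℝ)| ≤ 2 * |(j : ℝ)| := by exact_mod_cast h
  unfold bracket; linarith

theorem summable_bracket_rpow {p : ℝ} (hp : p < -1) : Summable fun k : ℤ => bracket k ^ p := by
  refine ((Real.summable_one_div_int_add_rpow (1 / 2) (-p)).2 (by linarith)).of_nonneg_of_le
    (fun k => by positivity) fun k => ?_
  have hk : 0 < |(k : ℝ) + 1 / 2| := abs_pos.2 fun h => by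
    have : 2 * k + 1 = 0 := by exact_mod_cast (by linarith : (2 * k + 1 : ℝ) = 0)
    omega
  have hle : |(k : ℝ) + 1 / 2| ≤ bracket k := by
    grw [abs_add_le, abs_of_pos (by norm_num : (0 : ℝ) < 1 / 2)]; linarith [abs_nonneg (k : ℝ)]
  rw [one_div, ← Real.rpow_neg hk.le, neg_neg]
  exact Real.rpow_le_rpow_of_nonpos hk hle (by linarith)

theorem Real.rpow_le_two_rpow_abs_mul_rpow {x y : ℝ} (hy : 0 < y) (hxy : x ≤ 2 * y)
    (hyx : y ≤ 2 * x) (t : ℝ) : x ^ t ≤ 2 ^ |t| * y ^ t := by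
  rcases le_total 0 t with ht | ht
  · rw [abs_of_nonneg ht, ← Real.mul_rpow zero_le_two hy.le]
    exact Real.rpow_le_rpow (by linarith) hxy ht
  · calc x ^ t ≤ (y / 2) ^ t := Real.rpow_le_rpow_of_nonpos (by positivity) (by linarith) ht
      _ = 2 ^ |t| * y ^ t := by
        rw [Real.div_rpow hy.le zero_le_two, abs_of_nonpos ht, Real.rpow_neg zero_le_two,
          div_eq_inv_mul]

theorem bracket_add_rpow_le_of_abs_le {i j : ℤ} (hij : |i| ≤ |j|) (hi : |i| ≤ |i + j|) {r t : ℝ}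
    (htr : t ≤ r) :
    bracket (i + j) ^ t ≤ 2 ^ |t| * (bracket i ^ (t - r) * bracket j ^ r) := by
  calc bracket (i + j) ^ t ≤ 2 ^ |t| * bracket j ^ t :=
      Real.rpow_le_two_rpow_abs_mul_rpow (bracket_pos j)
        (bracket_le_two_mul (by linarith [abs_add_le i j]))
        (bracket_le_two_mul (by linarith [add_sub_cancel_left i j ▸ abs_sub (i + j) i])) t
    _ = 2 ^ |t| * (bracket j ^ (t - r) * bracket j ^ r) := by
      rw [← Real.rpow_add (bracket_pos j), sub_add_cancel]
    _ ≤ 2 ^ |t| * (bracket i ^ (t - r) * bracket j ^ r) := by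
      have := Real.rpow_le_rpow_of_nonpos (bracket_pos i) (bracket_le_bracket hij)
        (sub_nonpos.2 htr)
      gcongr

theorem bracket_add_rpow_le {s r t : ℝ} (hs : 0 ≤ s) (hr : 0 ≤ r) (hts : t ≤ s) (htr : t ≤ r)
    (i j : ℤ) :
    bracket (i + j) ^ t ≤ 2 ^ |t| * (bracket i ^ s * bracket j ^ r) *
      (bracket i ^ (t - s - r) + bracket j ^ (t - s - r) + bracket (i + j) ^ (t - s - r)) := by
  have hu (k : ℤ) : 0 < bracket k ^ (t - s - r) := by positivity
  have split (k : ℤ) (x y : ℝ) : bracket k ^ x = bracket k ^ y * bracket k ^ (x - y) := by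
    rw [← Real.rpow_add (bracket_pos k), add_sub_cancel]
  obtain ⟨h₁, h₂⟩ | ⟨h₁, h₂⟩ | ⟨h₁, h₂⟩ : (|i| ≤ |j| ∧ |i| ≤ |i + j|) ∨
      (|j| ≤ |i| ∧ |j| ≤ |j + i|) ∨ (|i + j| ≤ |i| ∧ |i + j| ≤ |j|) := by
    rw [add_comm j i]
    rcases le_total |i| |j| with h | h <;> rcases le_total |i| |i + j| with h' | h' <;>
      rcases le_total |j| |i + j| with h'' | h'' <;> first
      | exact Or.inl ⟨h, h'⟩ | exact Or.inr (Or.inl ⟨h, h''⟩)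
      | exact Or.inr (Or.inr ⟨h', h''⟩) | exact Or.inr (Or.inr ⟨by order, by order⟩)
  · calc bracket (i + j) ^ t ≤ 2 ^ |t| * (bracket i ^ (t - r) * bracket j ^ r) :=
          bracket_add_rpow_le_of_abs_le h₁ h₂ htr
      _ = 2 ^ |t| * (bracket i ^ s * bracket j ^ r) * bracket i ^ (t - s - r) := by
          rw [split i (t - r) s, sub_right_comm]; ring
      _ ≤ _ := by gcongr; linarith [hu i, hu j, hu (i + j)]
  · calc bracket (i + j) ^ t ≤ 2 ^ |t| * (bracket j ^ (t - s) * bracket i ^ s) :=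
          add_comm i j ▸ bracket_add_rpow_le_of_abs_le h₁ h₂ hts
      _ = 2 ^ |t| * (bracket i ^ s * bracket j ^ r) * bracket j ^ (t - s - r) := by
          rw [split j (t - s) r]; ring
      _ ≤ _ := by gcongr; linarith [hu i, hu j, hu (i + j)]
  · have hi := Real.rpow_le_rpow (bracket_pos _).le (bracket_le_bracket h₁) hs
    have hj := Real.rpow_le_rpow (bracket_pos _).le (bracket_le_bracket h₂) hr
    have hc := Real.one_le_rpow one_le_two (abs_nonneg t)
    calc bracket (i + j) ^ t = bracket (i + j) ^ s * bracket (i + j) ^ r *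
          bracket (i + j) ^ (t - s - r) := by
          rw [split _ t s, split _ (t - s) r]; ring
      _ ≤ 1 * (bracket i ^ s * bracket j ^ r) * bracket (i + j) ^ (t - s - r) := by
          rw [one_mul]; gcongr
      _ ≤ _ := by gcongr; linarith [hu i, hu j, hu (i + j)]

noncomputable def weight (σ : ℝ) (k : ℤ) : ℝ≥0∞ := ENNReal.ofReal (bracket k ^ σ)

theorem one_le_weight {σ : ℝ} (hσ : 0 ≤ σ) (k : ℤ) : 1 ≤ weight σ k :=
  ENNReal.one_le_ofReal.2 (Real.one_le_rpow (one_le_bracket k) hσ)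

theorem weight_pos (σ : ℝ) (k : ℤ) : 0 < weight σ k :=
  ENNReal.ofReal_pos.2 (by positivity)

theorem tsum_weight_sq_ne_top {σ : ℝ} (hσ : σ < -1 / 2) : ∑' k, weight σ k ^ 2 ≠ ∞ := by
  have h (k : ℤ) : weight σ k ^ 2 = ENNReal.ofReal (bracket k ^ (σ * 2)) := by
    rw [weight, ← ENNReal.ofReal_pow (by positivity), ← Real.rpow_mul_natCast (bracket_pos k).le]
    norm_num
  simpa only [h] using (summable_bracket_rpow (by linarith)).tsum_ofReal_ne_top

theorem weight_add_le {s r t : ℝ} (hs : 0 ≤ s) (hr : 0 ≤ r) (hts : t ≤ s) (htr : t ≤ r)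
    (i j : ℤ) :
    weight t (i + j) ≤ ENNReal.ofReal (2 ^ |t|) * (weight s i * weight r j) *
      (weight (t - s - r) i + weight (t - s - r) j + weight (t - s - r) (i + j)) := by
  have h := ENNReal.ofReal_le_ofReal (bracket_add_rpow_le hs hr hts htr i j)
  rwa [ENNReal.ofReal_mul (by positivity), ENNReal.ofReal_mul (by positivity),
    ENNReal.ofReal_mul (by positivity), ENNReal.ofReal_add (by positivity) (by positivity),
    ENNReal.ofReal_add (by positivity) (by positivity)] at h

theorem tsum_sq_weight_mul_lconv_le {s r t : ℝ} (hs : 0 ≤ s) (hr : 0 ≤ r) (hts : t ≤ s)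
    (htr : t ≤ r) (α β : ℤ → ℝ≥0∞) :
    ∑' k, (weight t k * lconv α β k) ^ 2 ≤
      9 * ENNReal.ofReal (2 ^ |t|) ^ 2 * (∑' k, weight (t - s - r) k ^ 2) *
        (∑' i, (weight s i * α i) ^ 2) * ∑' j, (weight r j * β j) ^ 2 := by
  set c := ENNReal.ofReal (2 ^ |t|)
  set ω := weight (t - s - r)
  set A := fun i => weight s i * α i
  set B := fun j => weight r j * β j
  have pointwise (k : ℤ) : weight t k * lconv α β k ≤
      c * (lconv (ω * A) B k + lconv A (ω * B) k + ω k * lconv A B k) := by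
    simp only [lconv, ← ENNReal.tsum_mul_left, ← ENNReal.tsum_add]
    refine ENNReal.tsum_le_tsum fun j => ?_
    have h := weight_add_le hs hr hts htr (k - j) j
    rw [sub_add_cancel] at h
    calc weight t k * (α (k - j) * β j)
        ≤ c * (weight s (k - j) * weight r j) * (ω (k - j) + ω j + ω k) * (α (k - j) * β j) := by
          gcongr
      _ = _ := by simp only [A, B, Pi.mul_apply]; ring
  calc ∑' k, (weight t k * lconv α β k) ^ 2
      ≤ ∑' k, 3 * c ^ 2 *
          (lconv (ω * A) B k ^ 2 + lconv A (ω * B) k ^ 2 + (ω k * lconv A B k) ^ 2) :=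
        ENNReal.tsum_le_tsum fun k => calc
          _ ≤ (c * (lconv (ω * A) B k + lconv A (ω * B) k + ω k * lconv A B k)) ^ 2 := by
            exact pow_le_pow_left₀ zero_le (pointwise k) 2
          _ ≤ _ := by
            rw [mul_pow, mul_comm 3, mul_assoc]; gcongr; exact ENNReal.add_add_sq_le _ _ _
    _ = 3 * c ^ 2 * (∑' k, lconv (ω * A) B k ^ 2 + ∑' k, lconv A (ω * B) k ^ 2 +
          ∑' k, (ω k * lconv A B k) ^ 2) := by
        rw [ENNReal.tsum_mul_left, ENNReal.tsum_add, ENNReal.tsum_add]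
    _ ≤ 3 * c ^ 2 * ((∑' k, ω k ^ 2) * (∑' i, A i ^ 2) * (∑' j, B j ^ 2) +
          (∑' k, ω k ^ 2) * (∑' j, B j ^ 2) * (∑' i, A i ^ 2) +
          (∑' k, ω k ^ 2) * (∑' i, A i ^ 2) * (∑' j, B j ^ 2)) := by
        rw [lconv_comm A]
        gcongr
        exacts [tsum_lconv_mul_sq_le ω A B, tsum_lconv_mul_sq_le ω B A,
          tsum_mul_lconv_sq_le ω A B]
    _ = _ := by ring

theorem summable_iff_tsum_ofReal_ne_top {ι : Type*} {f : ι → ℝ} (hf : ∀ i, 0 ≤ f i) :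
    Summable f ↔ ∑' i, ENNReal.ofReal (f i) ≠ ∞ := by
  refine ⟨Summable.tsum_ofReal_ne_top, fun h => ?_⟩
  simpa only [ENNReal.toReal_ofReal (hf _)] using ENNReal.summable_toReal h

noncomputable def ehNormSq (σ : ℝ) (a : ℤ → ℂ) : ℝ≥0∞ := ∑' k, (weight σ k * ‖a k‖ₑ) ^ 2

theorem ofReal_hNorm_summand (σ : ℝ) (a : ℤ → ℂ) (k : ℤ) :
    ENNReal.ofReal (((1 + 2 * |(k : ℝ)|) ^ σ) ^ 2 * ‖a k‖ ^ 2) = (weight σ k * ‖a k‖ₑ) ^ 2 := by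
  rw [← mul_pow, ENNReal.ofReal_pow (by positivity), ENNReal.ofReal_mul (by positivity),
    ofReal_norm]
  rfl

theorem memH_iff_ehNormSq_ne_top {σ : ℝ} {a : ℤ → ℂ} : memH σ a ↔ ehNormSq σ a ≠ ∞ := by
  rw [memH, summable_iff_tsum_ofReal_ne_top fun k => by positivity]
  simp only [ofReal_hNorm_summand, ehNormSq]

theorem hNorm_eq_sqrt_toReal (σ : ℝ) (a : ℤ → ℂ) : hNorm σ a = √(ehNormSq σ a).toReal := by
  rw [hNorm, ehNormSq,
    ENNReal.tsum_toReal_eq fun k => ofReal_hNorm_summand σ a k ▸ ENNReal.ofReal_ne_top]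
  congr 1
  exact tsum_congr fun k => by rw [← ofReal_hNorm_summand, ENNReal.toReal_ofReal (by positivity)]

theorem enorm_conv_le (a b : ℤ → ℂ) (k : ℤ) : ‖conv a b k‖ₑ ≤ lconv (‖a ·‖ₑ) (‖b ·‖ₑ) k := by
  simpa only [conv, lconv, enorm_mul] using
    enorm_tsum_le_tsum_enorm (f := fun j => a (k - j) * b j)

theorem summable_norm_mul_sub {s r : ℝ} (hs : 0 ≤ s) (hr : 0 ≤ r) {a b : ℤ → ℂ}
    (ha : ehNormSq s a ≠ ∞) (hb : ehNormSq r b ≠ ∞) (k : ℤ) :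
    Summable fun j => ‖a (k - j) * b j‖ := by
  rw [← tsum_enorm_ne_top_iff_summable_norm]
  simp only [enorm_mul]
  have hle : lconv (‖a ·‖ₑ) (‖b ·‖ₑ) k ≤
      lconv (fun i => weight s i * ‖a i‖ₑ) (fun j => weight r j * ‖b j‖ₑ) k :=
    ENNReal.tsum_le_tsum fun j => by
      gcongr <;> exact le_mul_of_one_le_left zero_le (one_le_weight ‹_› _)
  have hsq := (lconv_sq_le _ _ k).trans_lt (ENNReal.mul_lt_top ha.lt_top hb.lt_top)
  rw [ENNReal.pow_lt_top_iff] at hsq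
  exact (hle.trans_lt (hsq.resolve_right two_ne_zero)).ne

noncomputable def convConst (s r t : ℝ) : ℝ≥0∞ :=
  9 * ENNReal.ofReal (2 ^ |t|) ^ 2 * ∑' k, weight (t - s - r) k ^ 2

theorem convConst_ne_top {s r t : ℝ} (h : 1 / 2 < s + r - t) : convConst s r t ≠ ∞ :=
  ENNReal.mul_ne_top (ENNReal.mul_ne_top (by norm_num) (ENNReal.pow_ne_top ENNReal.ofReal_ne_top))
    (tsum_weight_sq_ne_top (by linarith))

theorem convConst_ne_zero (s r t : ℝ) : convConst s r t ≠ 0 := by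
  refine mul_ne_zero (mul_ne_zero (by norm_num) (pow_ne_zero 2 (ENNReal.ofReal_pos.2 ?_).ne')) ?_
  · positivity
  · exact fun h => pow_ne_zero 2 (weight_pos _ 0).ne' (ENNReal.tsum_eq_zero.1 h 0)

theorem ehNormSq_conv_le {s r t : ℝ} (hs : 0 ≤ s) (hr : 0 ≤ r) (hts : t ≤ s) (htr : t ≤ r)
    (a b : ℤ → ℂ) :
    ehNormSq t (conv a b) ≤ convConst s r t * ehNormSq s a * ehNormSq r b :=
  (ENNReal.tsum_le_tsum fun k => by gcongr; exact enorm_conv_le a b k).trans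
    (tsum_sq_weight_mul_lconv_le hs hr hts htr _ _)

/-- The Convolution Lemma, part (a): `h^s(ℤ) × h^r(ℤ) → h^t(ℤ)`. -/
theorem convolution_lemma_a (s r t : ℝ) (hs : 0 ≤ s) (hr : 0 ≤ r)
    (ht : t ≤ min s r) (hsrt : 1 / 2 < s + r - t) :
    ∃ C : ℝ, 0 < C ∧ ∀ a b : ℤ → ℂ, memH s a → memH r b →
      (∀ k : ℤ, Summable fun j : ℤ => ‖a (k - j) * b j‖) ∧
      memH t (conv a b) ∧
      hNorm t (conv a b) ≤ C * hNorm s a * hNorm r b := by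
  have hts : t ≤ s := ht.trans (min_le_left s r)
  have htr : t ≤ r := ht.trans (min_le_right s r)
  have hK := convConst_ne_top hsrt
  refine ⟨√(convConst s r t).toReal,
    Real.sqrt_pos.2 (ENNReal.toReal_pos (convConst_ne_zero s r t) hK), fun a b ha hb => ?_⟩
  rw [memH_iff_ehNormSq_ne_top] at ha hb
  have hbound := ehNormSq_conv_le hs hr hts htr a b
  have hfin : convConst s r t * ehNormSq s a * ehNormSq r b ≠ ∞ :=
    ENNReal.mul_ne_top (ENNReal.mul_ne_top hK ha) hb
  refine ⟨summable_norm_mul_sub hs hr ha hb,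
    memH_iff_ehNormSq_ne_top.2 (ne_top_of_le_ne_top hfin hbound), ?_⟩
  simp only [hNorm_eq_sqrt_toReal]
  rw [← Real.sqrt_mul ENNReal.toReal_nonneg, ← Real.sqrt_mul (by positivity),
    ← ENNReal.toReal_mul, ← ENNReal.toReal_mul]
  exact Real.sqrt_le_sqrt (ENNReal.toReal_mono hfin hbound)
end

section
/- Let s, r ≥ 0 and t ≤ min(s, r) with s + r − t > 1/2. Then the convolution map is well defined and bounded from h^{−t}(ℤ) × h^{s}(ℤ) to h^{−r}(ℤ): there is a constant C with ‖a∗b‖_{h^{−r}} ≤ C‖a‖_{h^{−t}}‖b‖_{h^{s}} for all a ∈ h^{−t}(ℤ), b ∈ h^{s}(ℤ). -/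
open scoped BigOperators

/-!
Put `w k = 1 + 2|k|`, `α = w^{-t}|a|` and `β = w^s|b|`, so that `α, β ∈ ℓ²` and
`w(k)^{-r} |(a ∗ b)(k)| ≤ ∑_j K(k, j) α(k - j) β(j)` with
`K(k, j) = w(k)^{-r} w(k - j)^t w(j)^{-s}`.
A nonnegative kernel gives a bounded map `ℓ² × ℓ² → ℓ²` as soon as `∑_k K(k, k - m)²` is bounded
uniformly in `m` (Cauchy–Schwarz in `j`, then Fubini), or, after the substitution `j ↦ k - j`,
`∑_k K(k, j)²` uniformly in `j`. Using `w(k - j) ≤ w(k) + w(j)` when `t ≥ 0` and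
`w(k) ≤ w(k - j) + w(j)` when `t < 0`, `K` is dominated by a sum of two kernels
`w(k)^{-p} w(j)^{-q}` or `w(k)^{-p} w(k - j)^{-q}` with `p, q ≥ 0` and `p + q = s + r - t > 1/2`;
for these `∑_k w(k)^{-2p} w(k - m)^{-2q} ≤ 2 ∑_k w(k)^{-2(p + q)} < ∞`.
-/

lemma Real.rpow_neg_mul_rpow_neg_le {x y p q : ℝ} (hx : 0 < x) (hy : 0 < y) (hp : 0 ≤ p)
    (hq : 0 ≤ q) : x ^ (-p) * y ^ (-q) ≤ x ^ (-(p + q)) + y ^ (-(p + q)) := by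
  rcases le_total x y with hxy | hyx
  · calc x ^ (-p) * y ^ (-q) ≤ x ^ (-p) * x ^ (-q) :=
          mul_le_mul_of_nonneg_left (Real.rpow_le_rpow_of_nonpos hx hxy (by linarith))
            (Real.rpow_nonneg hx.le _)
      _ = x ^ (-(p + q)) := by rw [← Real.rpow_add hx]; ring_nf
      _ ≤ _ := le_add_of_nonneg_right (Real.rpow_nonneg hy.le _)
  · calc x ^ (-p) * y ^ (-q) ≤ y ^ (-p) * y ^ (-q) :=
          mul_le_mul_of_nonneg_right (Real.rpow_le_rpow_of_nonpos hy hyx (by linarith))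
            (Real.rpow_nonneg hy.le _)
      _ = y ^ (-(p + q)) := by rw [← Real.rpow_add hy]; ring_nf
      _ ≤ _ := le_add_of_nonneg_left (Real.rpow_nonneg hx.le _)

lemma Real.rpow_le_two_rpow_mul_add {x y z t : ℝ} (hx : 0 ≤ x) (hy : 0 ≤ y) (hz : 0 ≤ z)
    (hxyz : x ≤ y + z) (ht : 0 ≤ t) : x ^ t ≤ 2 ^ t * (y ^ t + z ^ t) := by
  have hmax : x ≤ 2 * max y z := by linarith [le_max_left y z, le_max_right y z]
  calc x ^ t ≤ (2 * max y z) ^ t := Real.rpow_le_rpow hx hmax ht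
    _ = 2 ^ t * max y z ^ t := Real.mul_rpow zero_le_two (le_max_of_le_left hy)
    _ ≤ 2 ^ t * (y ^ t + z ^ t) := by
        gcongr
        rcases max_choice y z with h | h <;> rw [h]
        · exact le_add_of_nonneg_right (Real.rpow_nonneg hz t)
        · exact le_add_of_nonneg_left (Real.rpow_nonneg hy t)

lemma Real.rpow_neg_le_two_rpow_mul {x y u : ℝ} (hx : 0 < x) (hxy : x ≤ 2 * y) (hu : 0 ≤ u) :
    y ^ (-u) ≤ 2 ^ u * x ^ (-u) := by
  have hy : 0 ≤ y := by linarith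
  calc y ^ (-u) = 2 ^ u * (2 * y) ^ (-u) := by
        rw [Real.mul_rpow zero_le_two hy, ← mul_assoc, ← Real.rpow_add zero_lt_two,
          add_neg_cancel, Real.rpow_zero, one_mul]
    _ ≤ 2 ^ u * x ^ (-u) := mul_le_mul_of_nonneg_left
        (Real.rpow_le_rpow_of_nonpos hx hxy (by linarith)) (Real.rpow_nonneg zero_le_two u)

lemma Real.summable_mul_and_sq_tsum_mul_le {ι : Type*} {u v : ι → ℝ} (hu : ∀ i, 0 ≤ u i)
    (hv : ∀ i, 0 ≤ v i) (hu2 : Summable fun i => u i ^ 2) (hv2 : Summable fun i => v i ^ 2) :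
    Summable (fun i => u i * v i) ∧
      (∑' i, u i * v i) ^ 2 ≤ (∑' i, u i ^ 2) * ∑' i, v i ^ 2 := by
  have h := Real.summable_and_inner_le_Lp_mul_Lq_tsum_of_nonneg Real.HolderConjugate.two_two hu hv
    (by simpa only [Real.rpow_two] using hu2) (by simpa only [Real.rpow_two] using hv2)
  simp only [Real.rpow_two, ← Real.sqrt_eq_rpow] at h
  refine ⟨h.1, ?_⟩
  calc (∑' i, u i * v i) ^ 2
      ≤ (√(∑' i, u i ^ 2) * √(∑' i, v i ^ 2)) ^ 2 :=
        pow_le_pow_left₀ (tsum_nonneg fun i => mul_nonneg (hu i) (hv i)) h.2 2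
    _ = (∑' i, u i ^ 2) * ∑' i, v i ^ 2 := by
        rw [mul_pow, Real.sq_sqrt (tsum_nonneg fun i => sq_nonneg _),
          Real.sq_sqrt (tsum_nonneg fun i => sq_nonneg _)]

noncomputable def kernelConv (K : ℤ → ℤ → ℝ) (f g : ℤ → ℝ) (k : ℤ) : ℝ :=
  ∑' j, K k j * (f (k - j) * g j)

/-- `C` bounds the square of the norm of `(f, g) ↦ kernelConv K f g` on `ℓ² × ℓ²`; testing
nonnegative sequences suffices because all kernels below are nonnegative. -/
def BoundedConvKernel (K : ℤ → ℤ → ℝ) (C : ℝ) : Prop :=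
  ∀ f g : ℤ → ℝ, (∀ m, 0 ≤ f m) → (∀ m, 0 ≤ g m) →
    Summable (fun m => f m ^ 2) → Summable (fun m => g m ^ 2) →
    (∀ k, Summable fun j => K k j * (f (k - j) * g j)) ∧
      Summable (fun k => kernelConv K f g k ^ 2) ∧
      ∑' k, kernelConv K f g k ^ 2 ≤ C * (∑' m, f m ^ 2) * ∑' m, g m ^ 2

lemma tsum_tsum_kernel_sq_le {K : ℤ → ℤ → ℝ} {f : ℤ → ℝ} {M : ℝ}
    (hKs : ∀ m, Summable fun k => K k (k - m) ^ 2) (hM : ∀ m, ∑' k, K k (k - m) ^ 2 ≤ M)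
    (hf : Summable fun m => f m ^ 2) :
    (∀ k, Summable fun j => (K k j * f (k - j)) ^ 2) ∧
      Summable (fun k => ∑' j, (K k j * f (k - j)) ^ 2) ∧
      ∑' k, ∑' j, (K k j * f (k - j)) ^ 2 ≤ M * ∑' m, f m ^ 2 := by
  let F : ℤ → ℤ → ℝ := fun m k => K k (k - m) ^ 2 * f m ^ 2
  have hF0 : 0 ≤ Function.uncurry F := fun p => mul_nonneg (sq_nonneg _) (sq_nonneg _)
  have hrow (m : ℤ) : ∑' k, F m k ≤ M * f m ^ 2 := by
    simp only [F, tsum_mul_right]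
    exact mul_le_mul_of_nonneg_right (hM m) (sq_nonneg _)
  have hF : Summable (Function.uncurry F) :=
    (summable_prod_of_nonneg hF0).mpr ⟨fun m => (hKs m).mul_right (f m ^ 2),
      (hf.mul_left M).of_nonneg_of_le (fun m => tsum_nonneg fun k => hF0 (m, k)) hrow⟩
  have hreindex (k : ℤ) :
      (fun j => (K k j * f (k - j)) ^ 2) = (fun m => F m k) ∘ Equiv.subLeft k := by
    ext j; simp [F, mul_pow]
  have htsum (k : ℤ) : ∑' j, (K k j * f (k - j)) ^ 2 = ∑' m, F m k := by
    rw [hreindex]; exact (Equiv.subLeft k).tsum_eq (fun m => F m k)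
  refine ⟨fun k => ?_, ?_, ?_⟩
  · rw [hreindex]
    exact (Equiv.subLeft k).summable_iff.mpr (hF.prod_symm.prod_factor k)
  · simp only [htsum]
    exact ((summable_prod_of_nonneg fun p => hF0 p.swap).mp hF.prod_symm).2
  · simp only [htsum]
    rw [hF.tsum_comm, ← tsum_mul_left]
    exact ((summable_prod_of_nonneg hF0).mp hF).2.tsum_le_tsum hrow (hf.mul_left M)

theorem BoundedConvKernel.of_tsum_sq_le {K : ℤ → ℤ → ℝ} {M : ℝ}
    (hK : ∀ k j, 0 ≤ K k j) (hKs : ∀ m, Summable fun k => K k (k - m) ^ 2)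
    (hM : ∀ m, ∑' k, K k (k - m) ^ 2 ≤ M) :
    BoundedConvKernel K M := by
  intro f g hf0 hg0 hf hg
  obtain ⟨hrow, hrows, hbound⟩ := tsum_tsum_kernel_sq_le hKs hM hf
  have hCS (k : ℤ) := Real.summable_mul_and_sq_tsum_mul_le (u := fun j => K k j * f (k - j))
    (fun j => mul_nonneg (hK _ _) (hf0 _)) hg0 (hrow k) hg
  simp only [mul_assoc] at hCS
  have hsumm := (hrows.mul_right _).of_nonneg_of_le (fun k => sq_nonneg _) fun k => (hCS k).2
  refine ⟨fun k => (hCS k).1, hsumm, ?_⟩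
  calc ∑' k, kernelConv K f g k ^ 2
      ≤ ∑' k, (∑' j, (K k j * f (k - j)) ^ 2) * ∑' m, g m ^ 2 :=
        hsumm.tsum_le_tsum (fun k => (hCS k).2) (hrows.mul_right _)
    _ ≤ M * (∑' m, f m ^ 2) * ∑' m, g m ^ 2 := by
        rw [tsum_mul_right]
        exact mul_le_mul_of_nonneg_right hbound (tsum_nonneg fun m => sq_nonneg _)

namespace BoundedConvKernel

variable {K K₁ K₂ : ℤ → ℤ → ℝ} {C C₁ C₂ : ℝ}

theorem comp_sub (h : BoundedConvKernel K C) : BoundedConvKernel (fun k j => K k (k - j)) C := by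
  intro f g hf0 hg0 hf hg
  obtain ⟨hs, hsq, hle⟩ := h g f hg0 hf0 hg hf
  have hreindex (k : ℤ) : (fun j => K k (k - j) * (f (k - j) * g j)) =
      (fun j => K k j * (g (k - j) * f j)) ∘ Equiv.subLeft k := by
    ext j; simp [mul_comm (g _)]
  have hconv : kernelConv (fun k j => K k (k - j)) f g = kernelConv K g f := by
    ext k
    exact (congrArg tsum (hreindex k)).trans
      ((Equiv.subLeft k).tsum_eq fun j => K k j * (g (k - j) * f j))
  refine ⟨fun k => ?_, hconv ▸ hsq, ?_⟩
  · rw [hreindex]; exact (Equiv.subLeft k).summable_iff.mpr (hs k)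
  · rw [hconv]; linarith

theorem const_mul (h : BoundedConvKernel K C) (c : ℝ) :
    BoundedConvKernel (fun k j => c * K k j) (c ^ 2 * C) := by
  intro f g hf0 hg0 hf hg
  obtain ⟨hs, hsq, hle⟩ := h f g hf0 hg0 hf hg
  have hconv : kernelConv (fun k j => c * K k j) f g = fun k => c * kernelConv K f g k := by
    ext k; simp only [kernelConv, mul_assoc, tsum_mul_left]
  refine ⟨fun k => by simpa only [mul_assoc] using (hs k).mul_left c, ?_, ?_⟩
  · simpa only [hconv, mul_pow] using hsq.mul_left (c ^ 2)
  · simp only [hconv, mul_pow, tsum_mul_left]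
    calc c ^ 2 * ∑' k, kernelConv K f g k ^ 2
        ≤ c ^ 2 * (C * (∑' m, f m ^ 2) * ∑' m, g m ^ 2) :=
          mul_le_mul_of_nonneg_left hle (sq_nonneg c)
      _ = _ := by ring

theorem of_le_add (hK : ∀ k j, 0 ≤ K k j) (hle : ∀ k j, K k j ≤ K₁ k j + K₂ k j)
    (h₁ : BoundedConvKernel K₁ C₁) (h₂ : BoundedConvKernel K₂ C₂) :
    BoundedConvKernel K (2 * (C₁ + C₂)) := by
  intro f g hf0 hg0 hf hg
  obtain ⟨hs₁, hsq₁, hle₁⟩ := h₁ f g hf0 hg0 hf hg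
  obtain ⟨hs₂, hsq₂, hle₂⟩ := h₂ f g hf0 hg0 hf hg
  have hX (k j : ℤ) : 0 ≤ f (k - j) * g j := mul_nonneg (hf0 _) (hg0 _)
  have hterm (k j : ℤ) : K k j * (f (k - j) * g j) ≤
      K₁ k j * (f (k - j) * g j) + K₂ k j * (f (k - j) * g j) := by
    rw [← add_mul]; exact mul_le_mul_of_nonneg_right (hle k j) (hX k j)
  have hs (k : ℤ) : Summable fun j => K k j * (f (k - j) * g j) :=
    ((hs₁ k).add (hs₂ k)).of_nonneg_of_le (fun j => mul_nonneg (hK k j) (hX k j)) (hterm k)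
  have hconv (k : ℤ) : kernelConv K f g k ≤ kernelConv K₁ f g k + kernelConv K₂ f g k :=
    ((hs k).tsum_le_tsum (hterm k) ((hs₁ k).add (hs₂ k))).trans_eq
      ((hs₁ k).tsum_add (hs₂ k))
  have hconv0 (k : ℤ) : 0 ≤ kernelConv K f g k :=
    tsum_nonneg fun j => mul_nonneg (hK k j) (hX k j)
  have hsq (k : ℤ) : kernelConv K f g k ^ 2 ≤
      2 * kernelConv K₁ f g k ^ 2 + 2 * kernelConv K₂ f g k ^ 2 := by
    nlinarith [hconv k, hconv0 k, sq_nonneg (kernelConv K₁ f g k - kernelConv K₂ f g k)]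
  have hdom := (hsq₁.mul_left 2).add (hsq₂.mul_left 2)
  have hsumm := hdom.of_nonneg_of_le (fun k => sq_nonneg _) hsq
  refine ⟨hs, hsumm, ?_⟩
  calc ∑' k, kernelConv K f g k ^ 2
      ≤ 2 * ∑' k, kernelConv K₁ f g k ^ 2 + 2 * ∑' k, kernelConv K₂ f g k ^ 2 := by
        rw [← tsum_mul_left, ← tsum_mul_left,
          ← (hsq₁.mul_left 2).tsum_add (hsq₂.mul_left 2)]
        exact hsumm.tsum_le_tsum hsq hdom
    _ ≤ _ := by linarith

end BoundedConvKernel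

def hWeight (k : ℤ) : ℝ := 1 + 2 * |(k : ℝ)|

lemma hWeight_pos (k : ℤ) : 0 < hWeight k := by
  unfold hWeight; positivity

lemma hWeight_rpow_pos (k : ℤ) (p : ℝ) : 0 < hWeight k ^ p :=
  Real.rpow_pos_of_pos (hWeight_pos k) p

lemma hWeight_rpow_mul_rpow (k : ℤ) (p q : ℝ) :
    hWeight k ^ p * hWeight k ^ q = hWeight k ^ (p + q) :=
  (Real.rpow_add (hWeight_pos k) p q).symm

lemma hWeight_rpow_sq (k : ℤ) (p : ℝ) : (hWeight k ^ p) ^ 2 = hWeight k ^ (2 * p) := by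
  rw [mul_comm, Real.rpow_mul (hWeight_pos k).le, Real.rpow_two]

lemma hWeight_sub_le (k j : ℤ) : hWeight (k - j) ≤ hWeight k + hWeight j := by
  unfold hWeight; push_cast; linarith [abs_sub (k : ℝ) j, abs_nonneg (j : ℝ)]

lemma hWeight_le_sub_add (k j : ℤ) : hWeight k ≤ hWeight (k - j) + hWeight j := by
  unfold hWeight; push_cast; linarith [abs_sub_abs_le_abs_sub (k : ℝ) j, abs_nonneg (j : ℝ)]

lemma summable_hWeight_rpow_neg {σ : ℝ} (hσ : 1 < σ) :
    Summable fun k : ℤ => hWeight k ^ (-σ) := by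
  refine (Real.summable_abs_int_rpow hσ).of_norm_bounded_eventually ?_
  filter_upwards [Filter.eventually_cofinite_ne 0] with k hk
  have hk' : 0 < |(k : ℝ)| := abs_pos.mpr (Int.cast_ne_zero.mpr hk)
  rw [Real.norm_of_nonneg (Real.rpow_nonneg (hWeight_pos k).le _)]
  exact Real.rpow_le_rpow_of_nonpos hk' (by unfold hWeight; linarith) (by linarith)

lemma tsum_hWeight_rpow_mul_le {p q : ℝ} (hp : 0 ≤ p) (hq : 0 ≤ q) (hpq : 1 < p + q)
    (m : ℤ) :
    Summable (fun k => hWeight k ^ (-p) * hWeight (k - m) ^ (-q)) ∧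
      ∑' k, hWeight k ^ (-p) * hWeight (k - m) ^ (-q) ≤ 2 * ∑' k, hWeight k ^ (-(p + q)) := by
  have hsum := summable_hWeight_rpow_neg hpq
  have hshift : Summable fun k => hWeight (k - m) ^ (-(p + q)) :=
    (Equiv.subRight m).summable_iff.mpr hsum
  have hle (k : ℤ) := Real.rpow_neg_mul_rpow_neg_le (hWeight_pos k) (hWeight_pos (k - m)) hp hq
  have hnonneg (k : ℤ) : 0 ≤ hWeight k ^ (-p) * hWeight (k - m) ^ (-q) :=
    (mul_pos (hWeight_rpow_pos k _) (hWeight_rpow_pos (k - m) _)).le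
  have hS := (hsum.add hshift).of_nonneg_of_le hnonneg hle
  refine ⟨hS, (hS.tsum_le_tsum hle (hsum.add hshift)).trans_eq ?_⟩
  have hshift_eq := (Equiv.subRight m).tsum_eq (fun k => hWeight k ^ (-(p + q)))
  simp only [Equiv.subRight_apply] at hshift_eq
  rw [hsum.tsum_add hshift, two_mul, hshift_eq]

theorem boundedConvKernel_hWeight {p q : ℝ} (hp : 0 ≤ p) (hq : 0 ≤ q) (hpq : 1 / 2 < p + q) :
    BoundedConvKernel (fun k j => hWeight k ^ (-p) * hWeight j ^ (-q))
      (2 * ∑' k, hWeight k ^ (-(2 * p + 2 * q))) := by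
  have h := tsum_hWeight_rpow_mul_le (p := 2 * p) (q := 2 * q) (by positivity) (by positivity)
    (by linarith)
  refine .of_tsum_sq_le (fun k j => (mul_pos (hWeight_rpow_pos k _) (hWeight_rpow_pos j _)).le)
    (fun m => ?_) (fun m => ?_)
  · simpa only [mul_pow, hWeight_rpow_sq, mul_neg] using (h m).1
  · simpa only [mul_pow, hWeight_rpow_sq, mul_neg] using (h m).2

/-- The kernel with `w(k)^ρ |a(k - j) b(j)| = K(k, j) (w^σ |a|)(k - j) (w^τ |b|)(j)`. -/
noncomputable def weightedConvKernel (ρ σ τ : ℝ) (k j : ℤ) : ℝ :=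
  hWeight k ^ ρ * (hWeight (k - j) ^ (-σ) * hWeight j ^ (-τ))

lemma weightedConvKernel_nonneg (ρ σ τ : ℝ) (k j : ℤ) :
    0 ≤ weightedConvKernel ρ σ τ k j :=
  (mul_pos (hWeight_rpow_pos k ρ)
    (mul_pos (hWeight_rpow_pos (k - j) _) (hWeight_rpow_pos j _))).le

theorem exists_boundedConvKernel_of_nonneg {s r t : ℝ} (ht : 0 ≤ t) (hts : t ≤ s)
    (htr : t ≤ r) (hsrt : 1 / 2 < s + r - t) :
    ∃ C, BoundedConvKernel (weightedConvKernel (-r) (-t) s) C := by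
  have hle (k j : ℤ) : weightedConvKernel (-r) (-t) s k j ≤
      2 ^ t * (hWeight k ^ (-(r - t)) * hWeight j ^ (-s)) +
        2 ^ t * (hWeight k ^ (-r) * hWeight j ^ (-(s - t))) := by
    have h := Real.rpow_le_two_rpow_mul_add (hWeight_pos (k - j)).le (hWeight_pos k).le
      (hWeight_pos j).le (hWeight_sub_le k j) ht
    have := hWeight_rpow_pos k (-r)
    have := hWeight_rpow_pos j (-s)
    calc weightedConvKernel (-r) (-t) s k j
        = hWeight k ^ (-r) * (hWeight (k - j) ^ t * hWeight j ^ (-s)) := by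
          rw [weightedConvKernel, neg_neg]
      _ ≤ hWeight k ^ (-r) * (2 ^ t * (hWeight k ^ t + hWeight j ^ t) * hWeight j ^ (-s)) := by
          gcongr
      _ = _ := by
          rw [neg_sub, sub_eq_add_neg, ← hWeight_rpow_mul_rpow, neg_sub, sub_eq_neg_add,
            ← hWeight_rpow_mul_rpow]
          ring
  have h₁ := (boundedConvKernel_hWeight (p := r - t) (q := s) (by linarith) (by linarith)
    (by linarith)).const_mul (2 ^ t)
  have h₂ := (boundedConvKernel_hWeight (p := r) (q := s - t) (by linarith) (by linarith)
    (by linarith)).const_mul (2 ^ t)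
  exact ⟨_, .of_le_add (weightedConvKernel_nonneg _ _ _) hle h₁ h₂⟩

theorem exists_boundedConvKernel_of_neg {s r t : ℝ} (hs : 0 ≤ s) (hr : 0 ≤ r) (ht : t < 0)
    (hsrt : 1 / 2 < s + r - t) : ∃ C, BoundedConvKernel (weightedConvKernel (-r) (-t) s) C := by
  have hle (k j : ℤ) : weightedConvKernel (-r) (-t) s k j ≤
      2 ^ (-t) * (hWeight k ^ (-(r - t)) * hWeight j ^ (-s)) +
        2 ^ s * (hWeight k ^ (-(r + s)) * hWeight (k - j) ^ (-(-t))) := by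
    rw [weightedConvKernel, neg_neg]
    have := hWeight_rpow_pos k (-r)
    have := hWeight_rpow_pos (k - j) t
    have := hWeight_rpow_pos j (-s)
    have := hWeight_rpow_pos k (-(r - t))
    have := hWeight_rpow_pos k (-(r + s))
    have hkj := hWeight_le_sub_add k j
    rcases le_total (hWeight j) (hWeight (k - j)) with hj | hj
    · have h := Real.rpow_neg_le_two_rpow_mul (y := hWeight (k - j)) (hWeight_pos k) (by linarith)
        (neg_nonneg.mpr ht.le)
      rw [neg_neg] at h
      calc hWeight k ^ (-r) * (hWeight (k - j) ^ t * hWeight j ^ (-s))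
          ≤ hWeight k ^ (-r) * (2 ^ (-t) * hWeight k ^ t * hWeight j ^ (-s)) := by gcongr
        _ = 2 ^ (-t) * (hWeight k ^ (-(r - t)) * hWeight j ^ (-s)) := by
            rw [neg_sub, sub_eq_add_neg, ← hWeight_rpow_mul_rpow]; ring
        _ ≤ _ := le_add_of_nonneg_right (by positivity)
    · have h := Real.rpow_neg_le_two_rpow_mul (y := hWeight j) (hWeight_pos k) (by linarith) hs
      calc hWeight k ^ (-r) * (hWeight (k - j) ^ t * hWeight j ^ (-s))
          ≤ hWeight k ^ (-r) * (hWeight (k - j) ^ t * (2 ^ s * hWeight k ^ (-s))) := by gcongr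
        _ = 2 ^ s * (hWeight k ^ (-(r + s)) * hWeight (k - j) ^ t) := by
            rw [neg_add, ← hWeight_rpow_mul_rpow]; ring
        _ ≤ _ := le_add_of_nonneg_left (by positivity)
  have h₁ := (boundedConvKernel_hWeight (p := r - t) (q := s) (by linarith) hs
    (by linarith)).const_mul (2 ^ (-t))
  -- `∑_k w(k)^{-2(r + s)}` may diverge, so this piece has to be tested against `α`.
  have h₂ := (boundedConvKernel_hWeight (p := r + s) (q := -t) (by linarith) (by linarith)
    (by linarith)).comp_sub.const_mul (2 ^ s)
  exact ⟨_, .of_le_add (weightedConvKernel_nonneg _ _ _) hle h₁ h₂⟩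

lemma memH_iff {σ : ℝ} {a : ℤ → ℂ} :
    memH σ a ↔ Summable fun k => (hWeight k ^ σ * ‖a k‖) ^ 2 := by
  simp only [memH, hWeight, mul_pow]

lemma hNorm_eq (σ : ℝ) (a : ℤ → ℂ) :
    hNorm σ a = √(∑' k, (hWeight k ^ σ * ‖a k‖) ^ 2) := by
  simp only [hNorm, hWeight, mul_pow]

lemma hNorm_nonneg (σ : ℝ) (a : ℤ → ℂ) : 0 ≤ hNorm σ a := Real.sqrt_nonneg _

lemma norm_eq_hWeight_rpow_neg_mul (σ : ℝ) (a : ℤ → ℂ) (k : ℤ) :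
    ‖a k‖ = hWeight k ^ (-σ) * (hWeight k ^ σ * ‖a k‖) := by
  rw [← mul_assoc, hWeight_rpow_mul_rpow, neg_add_cancel, Real.rpow_zero, one_mul]

theorem conv_summable_memH_hNorm_le {σ τ ρ C : ℝ} {a b : ℤ → ℂ}
    (hK : BoundedConvKernel (weightedConvKernel ρ σ τ) C)
    (ha : memH σ a) (hb : memH τ b) :
    (∀ k, Summable fun j => ‖a (k - j) * b j‖) ∧ memH ρ (conv a b) ∧
      hNorm ρ (conv a b) ≤ √C * hNorm σ a * hNorm τ b := by
  set α : ℤ → ℝ := fun m => hWeight m ^ σ * ‖a m‖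
  set β : ℤ → ℝ := fun m => hWeight m ^ τ * ‖b m‖
  have hα0 (m : ℤ) : 0 ≤ α m := mul_nonneg (hWeight_rpow_pos m σ).le (norm_nonneg _)
  have hβ0 (m : ℤ) : 0 ≤ β m := mul_nonneg (hWeight_rpow_pos m τ).le (norm_nonneg _)
  obtain ⟨hs, hsq, hle⟩ := hK α β hα0 hβ0 (memH_iff.mp ha) (memH_iff.mp hb)
  have hterm (k j : ℤ) : hWeight k ^ ρ * ‖a (k - j) * b j‖ =
      weightedConvKernel ρ σ τ k j * (α (k - j) * β j) := by
    rw [weightedConvKernel, norm_mul, norm_eq_hWeight_rpow_neg_mul σ a,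
      norm_eq_hWeight_rpow_neg_mul τ b]
    ring
  have hsum (k : ℤ) : Summable fun j => ‖a (k - j) * b j‖ :=
    (summable_mul_left_iff (hWeight_rpow_pos k ρ).ne').mp
      (by simpa only [hterm] using hs k)
  have hconv (k : ℤ) :
      hWeight k ^ ρ * ‖conv a b k‖ ≤ kernelConv (weightedConvKernel ρ σ τ) α β k :=
    calc hWeight k ^ ρ * ‖conv a b k‖ ≤ hWeight k ^ ρ * ∑' j, ‖a (k - j) * b j‖ :=
          mul_le_mul_of_nonneg_left (norm_tsum_le_tsum_norm (hsum k)) (hWeight_rpow_pos k ρ).le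
      _ = _ := by
          rw [← tsum_mul_left]
          exact tsum_congr (hterm k)
  have hdom (k : ℤ) : (hWeight k ^ ρ * ‖conv a b k‖) ^ 2 ≤
      kernelConv (weightedConvKernel ρ σ τ) α β k ^ 2 :=
    pow_le_pow_left₀ (mul_nonneg (hWeight_rpow_pos k ρ).le (norm_nonneg _)) (hconv k) 2
  have hmem := hsq.of_nonneg_of_le (fun k => sq_nonneg _) hdom
  refine ⟨hsum, memH_iff.mpr hmem, ?_⟩
  rw [hNorm_eq, hNorm_eq, hNorm_eq, ← Real.sqrt_mul' _ (tsum_nonneg fun k => sq_nonneg _),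
    ← Real.sqrt_mul' _ (tsum_nonneg fun k => sq_nonneg _)]
  exact Real.sqrt_le_sqrt ((hmem.tsum_le_tsum hdom hsq).trans hle)

/-- The Convolution Lemma, part (b): `h^{-t}(ℤ) × h^{s}(ℤ) → h^{-r}(ℤ)`. -/
theorem convolution_lemma_b (s r t : ℝ) (hs : 0 ≤ s) (hr : 0 ≤ r)
    (ht : t ≤ min s r) (hsrt : 1 / 2 < s + r - t) :
    ∃ C : ℝ, 0 < C ∧ ∀ a b : ℤ → ℂ, memH (-t) a → memH s b →
      (∀ k : ℤ, Summable fun j : ℤ => ‖a (k - j) * b j‖) ∧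
      memH (-r) (conv a b) ∧
      hNorm (-r) (conv a b) ≤ C * hNorm (-t) a * hNorm s b := by
  obtain ⟨C, hC⟩ : ∃ C, BoundedConvKernel (weightedConvKernel (-r) (-t) s) C := by
    rcases le_or_gt 0 t with h0 | h0
    · exact exists_boundedConvKernel_of_nonneg h0 (ht.trans (min_le_left s r))
        (ht.trans (min_le_right s r)) hsrt
    · exact exists_boundedConvKernel_of_neg hs hr h0 hsrt
  refine ⟨√C + 1, by positivity, fun a b ha hb => ?_⟩
  obtain ⟨hsum, hmem, hle⟩ := conv_summable_memH_hNorm_le hC ha hb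
  refine ⟨hsum, hmem, hle.trans ?_⟩
  exact mul_le_mul_of_nonneg_right (mul_le_mul_of_nonneg_right (by linarith) (hNorm_nonneg _ a))
    (hNorm_nonneg _ b)
end

section
/- If s + r − t < 1/2 (with s, r ≥ 0, t ≤ min(s,r)), then the convolution does not map h^s(ℤ) × h^r(ℤ) into h^t(ℤ); i.e., there exist a ∈ h^s(ℤ) and b ∈ h^r(ℤ) such that either a∗b is not well defined (the defining series fails to converge absolutely at some k) or a∗b ∉ h^t(ℤ). -/
open scoped BigOperators

/-!
Take `a(k) = k^(-A)` and `b(k) = k^(-B)` for `k ≥ 1` (zero otherwise), with `A` just above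
`s + 1/2` and `B` just above `r + 1/2`, so that `a ∈ h^s` and `b ∈ h^r`. All terms of
`(a ∗ b)(k)` are positive, and each of its `k - 1` terms is at least `k^(-A-B)`, so
`(a ∗ b)(k) ≳ k^(1-A-B)`. Then `(1+2k)^t |(a ∗ b)(k)| ≳ k^(t+1-A-B)`, and
`t + 1 - A - B ≥ -1/2` precisely because `s + r - t < 1/2` leaves room for the two margins:
the squares are not summable.
-/

open Filter Finset

lemma summable_sq_rpow_nat_iff {p : ℝ} :
    Summable (fun n : ℕ => ((n : ℝ) ^ p) ^ 2) ↔ p < -1 / 2 := by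
  simp_rw [← Real.rpow_mul_natCast (Nat.cast_nonneg _)]
  rw [Real.summable_nat_rpow, Nat.cast_ofNat]
  constructor <;> intro h <;> linarith

lemma summable_sq_of_le_rpow {f : ℕ → ℝ} {C p : ℝ} (hp : p < -1 / 2)
    (hf : ∀ᶠ n in atTop, 0 ≤ f n ∧ f n ≤ C * (n : ℝ) ^ p) :
    Summable fun n => f n ^ 2 := by
  refine .of_norm_bounded_eventually_nat
    ((summable_sq_rpow_nat_iff.mpr hp).mul_left (C ^ 2)) (hf.mono fun n hn => ?_)
  rw [Real.norm_of_nonneg (sq_nonneg _), ← mul_pow]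
  exact pow_le_pow_left₀ hn.1 hn.2 2

lemma not_summable_sq_of_rpow_le {f : ℕ → ℝ} {c p : ℝ} (hc : 0 < c) (hp : -1 / 2 ≤ p)
    (hf : ∀ᶠ n : ℕ in atTop, c * (n : ℝ) ^ p ≤ f n) :
    ¬ Summable fun n => f n ^ 2 := by
  intro hsum
  have hpow : Summable fun n : ℕ => c ^ 2 * ((n : ℝ) ^ p) ^ 2 := by
    refine .of_norm_bounded_eventually_nat hsum (hf.mono fun n hn => ?_)
    have hnonneg : 0 ≤ c * (n : ℝ) ^ p := by positivity
    rw [Real.norm_of_nonneg (by positivity), ← mul_pow]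
    exact pow_le_pow_left₀ hnonneg hn 2
  have := summable_sq_rpow_nat_iff.mp ((summable_mul_left_iff (by positivity)).mp hpow)
  linarith

lemma min_one_mul_rpow_le_one_add_two_mul_rpow {x : ℝ} (hx : 1 ≤ x) (σ : ℝ) :
    min 1 (3 ^ σ) * x ^ σ ≤ (1 + 2 * x) ^ σ := by
  rcases le_total 0 σ with hσ | hσ
  · calc min 1 (3 ^ σ) * x ^ σ ≤ 1 * x ^ σ := by gcongr; exact min_le_left _ _
      _ ≤ (1 + 2 * x) ^ σ := by rw [one_mul]; gcongr; linarith
  · calc min 1 (3 ^ σ) * x ^ σ ≤ 3 ^ σ * x ^ σ := by gcongr; exact min_le_right _ _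
      _ = (3 * x) ^ σ := (Real.mul_rpow (by norm_num) (by linarith)).symm
      _ ≤ (1 + 2 * x) ^ σ := Real.rpow_le_rpow_of_nonpos (by linarith) (by linarith) hσ

lemma one_add_two_mul_rpow_le_max_one_mul_rpow {x : ℝ} (hx : 1 ≤ x) (σ : ℝ) :
    (1 + 2 * x) ^ σ ≤ max 1 (3 ^ σ) * x ^ σ := by
  rcases le_total 0 σ with hσ | hσ
  · calc (1 + 2 * x) ^ σ ≤ (3 * x) ^ σ := by gcongr; linarith
      _ = 3 ^ σ * x ^ σ := Real.mul_rpow (by norm_num) (by linarith)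
      _ ≤ max 1 (3 ^ σ) * x ^ σ := by gcongr; exact le_max_right _ _
  · calc (1 + 2 * x) ^ σ ≤ x ^ σ := Real.rpow_le_rpow_of_nonpos (by linarith) (by linarith) hσ
      _ = 1 * x ^ σ := (one_mul _).symm
      _ ≤ max 1 (3 ^ σ) * x ^ σ := by gcongr; exact le_max_left _ _

lemma memH_iff_summable_sq {σ : ℝ} {a : ℤ → ℂ} :
    memH σ a ↔ Summable fun k : ℤ => ((1 + 2 * |(k : ℝ)|) ^ σ * ‖a k‖) ^ 2 := by
  simp_rw [memH, mul_pow]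

lemma memH.summable_nat {σ : ℝ} {a : ℤ → ℂ} (h : memH σ a) :
    Summable fun n : ℕ => ((1 + 2 * (n : ℝ)) ^ σ * ‖a n‖) ^ 2 := by
  simpa using (summable_int_iff_summable_nat_and_neg.mp (memH_iff_summable_sq.mp h)).1

lemma memH_of_summable_nat {σ : ℝ} {a : ℤ → ℂ} (ha : ∀ k ≤ 0, a k = 0)
    (h : Summable fun n : ℕ => ((1 + 2 * (n : ℝ)) ^ σ * ‖a n‖) ^ 2) : memH σ a := by
  refine memH_iff_summable_sq.mpr (summable_int_iff_summable_nat_and_neg.mpr ⟨by simpa, ?_⟩)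
  simp [ha _ (neg_nonpos.mpr (Int.natCast_nonneg _))]

noncomputable def powerSeq (A : ℝ) : ℤ → ℂ :=
  fun k => if 0 < k then (((k : ℝ) ^ (-A) : ℝ) : ℂ) else 0

lemma powerSeq_of_pos (A : ℝ) {k : ℤ} (hk : 0 < k) :
    powerSeq A k = (((k : ℝ) ^ (-A) : ℝ) : ℂ) :=
  if_pos hk

lemma powerSeq_of_nonpos (A : ℝ) {k : ℤ} (hk : k ≤ 0) : powerSeq A k = 0 :=
  if_neg hk.not_gt

lemma norm_powerSeq_of_pos (A : ℝ) {k : ℤ} (hk : 0 < k) :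
    ‖powerSeq A k‖ = (k : ℝ) ^ (-A) := by
  have hk' : (0 : ℝ) ≤ k := by exact_mod_cast hk.le
  rw [powerSeq_of_pos A hk, Complex.norm_real, Real.norm_of_nonneg (Real.rpow_nonneg hk' _)]

lemma memH_powerSeq {σ A : ℝ} (hA : σ - A < -1 / 2) : memH σ (powerSeq A) := by
  refine memH_of_summable_nat (fun k => powerSeq_of_nonpos A)
    (summable_sq_of_le_rpow (C := max 1 (3 ^ σ)) hA ?_)
  filter_upwards [eventually_ge_atTop 1] with n hn
  have hn' : (1 : ℝ) ≤ n := by exact_mod_cast hn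
  rw [norm_powerSeq_of_pos A (by exact_mod_cast hn), Int.cast_natCast]
  refine ⟨by positivity, ?_⟩
  calc (1 + 2 * (n : ℝ)) ^ σ * (n : ℝ) ^ (-A)
      ≤ max 1 (3 ^ σ) * (n : ℝ) ^ σ * (n : ℝ) ^ (-A) := by
        gcongr; exact one_add_two_mul_rpow_le_max_one_mul_rpow hn' σ
    _ = max 1 (3 ^ σ) * (n : ℝ) ^ (σ - A) := by
        rw [sub_eq_add_neg, Real.rpow_add (by linarith), mul_assoc]

lemma conv_powerSeq_eq_sum (A B : ℝ) (k : ℤ) :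
    conv (powerSeq A) (powerSeq B) k = ∑ j ∈ Ico 1 k, powerSeq A (k - j) * powerSeq B j := by
  refine tsum_eq_sum fun j hj => ?_
  rcases le_or_gt j 0 with hj0 | hj0
  · rw [powerSeq_of_nonpos B hj0, mul_zero]
  · rw [powerSeq_of_nonpos A (by rw [mem_Ico] at hj; omega), zero_mul]

lemma sub_one_mul_rpow_le_norm_conv_powerSeq {A B : ℝ} (hA : 0 ≤ A) (hB : 0 ≤ B) {k : ℤ}
    (hk : 0 < k) :
    ((k : ℝ) - 1) * ((k : ℝ) ^ (-A) * (k : ℝ) ^ (-B)) ≤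
      ‖conv (powerSeq A) (powerSeq B) k‖ := by
  have hterm : ∀ j ∈ Ico 1 k, (k : ℝ) ^ (-A) * (k : ℝ) ^ (-B) ≤
      (powerSeq A (k - j) * powerSeq B j).re := by
    intro j hj
    obtain ⟨hj1, hjk⟩ := mem_Ico.mp hj
    have hkj : (0 : ℝ) < ((k - j : ℤ) : ℝ) := by exact_mod_cast sub_pos.mpr hjk
    have hj0 : (0 : ℝ) < (j : ℝ) := by exact_mod_cast hj1
    rw [powerSeq_of_pos A (by omega), powerSeq_of_pos B (by omega), ← Complex.ofReal_mul,
      Complex.ofReal_re]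
    gcongr ?_ * ?_
    · exact Real.rpow_le_rpow_of_nonpos hkj (by push_cast; linarith) (by linarith)
    · exact Real.rpow_le_rpow_of_nonpos hj0 (by exact_mod_cast hjk.le) (by linarith)
  have hcard : ((#(Ico 1 k) : ℕ) : ℝ) = (k : ℝ) - 1 := by
    rw [Int.card_Ico]
    exact_mod_cast Int.toNat_of_nonneg (sub_nonneg.mpr hk)
  calc ((k : ℝ) - 1) * ((k : ℝ) ^ (-A) * (k : ℝ) ^ (-B))
      ≤ ∑ j ∈ Ico 1 k, (powerSeq A (k - j) * powerSeq B j).re := by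
        rw [← hcard, ← nsmul_eq_mul]; exact card_nsmul_le_sum _ _ _ hterm
    _ = (conv (powerSeq A) (powerSeq B) k).re := by rw [conv_powerSeq_eq_sum, Complex.re_sum]
    _ ≤ _ := Complex.re_le_norm _

lemma not_memH_conv_powerSeq {t A B : ℝ} (hA : 0 ≤ A) (hB : 0 ≤ B)
    (h : -1 / 2 ≤ t + 1 - A - B) :
    ¬ memH t (conv (powerSeq A) (powerSeq B)) := by
  intro hmem
  refine not_summable_sq_of_rpow_le (c := min 1 (3 ^ t) / 2) (by positivity) h ?_
    hmem.summable_nat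
  filter_upwards [eventually_ge_atTop 2] with n hn
  have hn' : (2 : ℝ) ≤ n := by exact_mod_cast hn
  have hconv := sub_one_mul_rpow_le_norm_conv_powerSeq hA hB (k := (n : ℤ)) (by omega)
  rw [Int.cast_natCast] at hconv
  have hsplit :
      (n : ℝ) ^ (t + 1 - A - B) = (n : ℝ) ^ t * n * ((n : ℝ) ^ (-A) * (n : ℝ) ^ (-B)) := by
    rw [show t + 1 - A - B = t + 1 + -A + -B by ring, Real.rpow_add (by linarith),
      Real.rpow_add (by linarith), Real.rpow_add (by linarith), Real.rpow_one, mul_assoc]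
  calc min 1 (3 ^ t) / 2 * (n : ℝ) ^ (t + 1 - A - B)
      = min 1 (3 ^ t) * (n : ℝ) ^ t * ((n / 2) * ((n : ℝ) ^ (-A) * (n : ℝ) ^ (-B))) := by
        rw [hsplit]; ring
    _ ≤ (1 + 2 * (n : ℝ)) ^ t * (((n : ℝ) - 1) * ((n : ℝ) ^ (-A) * (n : ℝ) ^ (-B))) := by
        gcongr
        · exact min_one_mul_rpow_le_one_add_two_mul_rpow (by linarith) t
        · linarith
    _ ≤ (1 + 2 * (n : ℝ)) ^ t * ‖conv (powerSeq A) (powerSeq B) n‖ := by gcongr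

theorem convolution_lemma_fails_general (s r t : ℝ) (hs : 0 ≤ s) (hr : 0 ≤ r)
    (hsrt : s + r - t < 1 / 2) :
    ∃ a b : ℤ → ℂ, memH s a ∧ memH r b ∧
      ((∃ k : ℤ, ¬ Summable fun j : ℤ => ‖a (k - j) * b j‖) ∨
        ¬ memH t (conv a b)) := by
  obtain ⟨ε, hε, hεsrt⟩ : ∃ ε > 0, s + r - t + 2 * ε ≤ 1 / 2 :=
    ⟨(1 / 2 - (s + r - t)) / 4, by linarith, by linarith⟩
  refine ⟨powerSeq (s + 1 / 2 + ε), powerSeq (r + 1 / 2 + ε),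
    memH_powerSeq (by linarith), memH_powerSeq (by linarith), Or.inr ?_⟩
  exact not_memH_conv_powerSeq (by linarith) (by linarith) (by linarith)

/-- Failure of the Convolution Lemma when `s + r - t < 1/2`. -/
theorem convolution_lemma_fails (s r t : ℝ) (hs : 0 ≤ s) (hr : 0 ≤ r)
    (ht : t ≤ min s r) (hsrt : s + r - t < 1 / 2) :
    ∃ a b : ℤ → ℂ, memH s a ∧ memH r b ∧
      ((∃ k : ℤ, ¬ Summable fun j : ℤ => ‖a (k - j) * b j‖) ∨
        ¬ memH t (conv a b)) :=
  convolution_lemma_fails_general s r t hs hr hsrt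
end

section
/- Let s ≥ 0 and let q̂ ∈ h^s(ℤ) with q̂(0) = 0. Define ϱ(n) := (1/π²) Σ_{j∈ℤ∖{±n}} q̂(n−j)q̂(n+j)/((n−j)(n+j)) for n ∈ ℕ. Then the series defining ϱ(n) converges absolutely for each n ≥ 1 and the sequence {ϱ(n)}_{n∈ℕ} belongs to h^{1+s}(ℕ), i.e., Σ_{n≥1}(1+2n)^{2(1+s)}|ϱ(n)|² < ∞. -/
open scoped BigOperators

/-- `ϱ(n) = (1/π²) Σ_{j ∈ ℤ∖{±n}} q̂(n−j) q̂(n+j) / ((n−j)(n+j))`. -/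
noncomputable def rho (q : ℤ → ℂ) (n : ℤ) : ℂ :=
  (1 / (Real.pi : ℂ) ^ 2) *
    ∑' j : ℤ, if j = n ∨ j = -n then 0
      else q (n - j) * q (n + j) / (((n : ℂ) - (j : ℂ)) * ((n : ℂ) + (j : ℂ)))

/-!
Put `b(k) = |q̂(k)/k|` and `c(k) = (1 + 2|k|)^s |q̂(k)|`. Then `|ϱ(n)| ≤ π⁻² (b ⋆ b)(2n)`.
Since `1 + 2|n| ≤ max (1 + 2|2n - k|) (1 + 2|k|)` and `(1 + 2|k|)^(1+s) b(k) ≤ 3 c(k)`, the weight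
can be moved onto one factor: `(1 + 2n)^(1+s) |ϱ(n)| ≤ 6 π⁻² (c ⋆ b)(2n)`. Cauchy–Schwarz with
weights `b` gives `(c ⋆ b)² ≤ ‖b‖₁ (c² ⋆ b)`, and `c² ⋆ b` is summable as the convolution of two
summable sequences; `b ∈ ℓ¹` because `q̂ ∈ ℓ²` and `1/k ∈ ℓ²`.
-/

theorem Summable.mul_of_summable_sq {ι : Type*} {f g : ι → ℝ}
    (hf : Summable fun i => f i ^ 2) (hg : Summable fun i => g i ^ 2) :
    Summable fun i => f i * g i :=
  Summable.of_norm_bounded ((hf.add hg).div_const 2) fun i => by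
    rw [Real.norm_eq_abs, abs_mul]
    nlinarith [sq_abs (f i), sq_abs (g i), sq_nonneg (|f i| - |g i|)]

theorem tsum_sq_le_tsum_mul_tsum_of_sq_le_mul {ι : Type*} {r f g : ι → ℝ}
    (hf : ∀ i, 0 ≤ f i) (hg : ∀ i, 0 ≤ g i) (hfs : Summable f) (hgs : Summable g)
    (hr : ∀ i, r i ^ 2 ≤ f i * g i) : (∑' i, r i) ^ 2 ≤ (∑' i, f i) * ∑' i, g i := by
  have hrs : Summable r :=
    Summable.of_norm_bounded ((hfs.add hgs).div_const 2) fun i =>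
      abs_le_of_sq_le_sq (by nlinarith [hr i, sq_nonneg (f i - g i)]) (by linarith [hf i, hg i])
  refine le_of_tendsto' (hrs.hasSum.pow 2) fun t => ?_
  calc (∑ i ∈ t, r i) ^ 2 ≤ (∑ i ∈ t, f i) * ∑ i ∈ t, g i :=
        Finset.sum_sq_le_sum_mul_sum_of_sq_le_mul t (fun i _ => hf i) (fun i _ => hg i)
          fun i _ => hr i
    _ ≤ (∑' i, f i) * ∑' i, g i :=
        mul_le_mul (hfs.sum_le_tsum t fun i _ => hf i) (hgs.sum_le_tsum t fun i _ => hg i)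
          (Finset.sum_nonneg fun i _ => hg i) (tsum_nonneg hf)

/-- The convolution `f ⋆ g` of the header; `0` where the series diverges. -/
noncomputable def intConv (f g : ℤ → ℝ) (l : ℤ) : ℝ := ∑' k, f (l - k) * g k

theorem intConv_comm (f g : ℤ → ℝ) (l : ℤ) : intConv f g l = intConv g f l := by
  rw [intConv, ← (Equiv.subLeft l).tsum_eq]
  simp only [intConv, Equiv.subLeft_apply, sub_sub_cancel, mul_comm]

theorem tsum_mul_shift_eq_intConv (f g : ℤ → ℝ) (m : ℤ) :
    ∑' j, f (m - j) * g (m + j) = intConv f g (2 * m) := by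
  rw [intConv, ← (Equiv.addLeft m).tsum_eq fun k => f (2 * m - k) * g k]
  refine tsum_congr fun j => ?_
  simp only [Equiv.coe_addLeft]
  congr 2
  ring

theorem summable_intConv_summand {f g : ℤ → ℝ} (hf : Summable fun k => f k ^ 2)
    (hg : Summable fun k => g k ^ 2) (l : ℤ) : Summable fun k => f (l - k) * g k :=
  (hf.comp_injective (sub_right_injective (b := l))).mul_of_summable_sq hg

theorem sq_intConv_le {f g : ℤ → ℝ} (hg : ∀ k, 0 ≤ g k) (hgs : Summable g)
    (hf : Summable fun k => f k ^ 2) (l : ℤ) :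
    intConv f g l ^ 2 ≤ (∑' k, g k) * intConv (fun k => f k ^ 2) g l := by
  have hfg : Summable fun k => f (l - k) ^ 2 * g k :=
    Summable.of_nonneg_of_le (fun k => mul_nonneg (sq_nonneg _) (hg k))
      (fun k => mul_le_mul_of_nonneg_left (hgs.le_tsum k fun j _ => hg j) (sq_nonneg _))
      ((hf.comp_injective (sub_right_injective (b := l))).mul_right (∑' k, g k))
  exact tsum_sq_le_tsum_mul_tsum_of_sq_le_mul hg (fun k => mul_nonneg (sq_nonneg _) (hg k))
    hgs hfg fun k => le_of_eq (by ring)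

theorem summable_intConv {f g : ℤ → ℝ} (hf : ∀ k, 0 ≤ f k) (hg : ∀ k, 0 ≤ g k)
    (hfs : Summable f) (hgs : Summable g) : Summable (intConv f g) := by
  have hprod : Summable fun p : ℤ × ℤ => f (p.2 - p.1) * g p.1 := by
    refine (summable_prod_of_nonneg fun p => mul_nonneg (hf _) (hg _)).2
      ⟨fun k => (hfs.comp_injective (sub_left_injective (b := k))).mul_right (g k), ?_⟩
    simp only [tsum_mul_right]
    refine hgs.mul_left (∑' l, f l) |>.congr fun k => ?_
    rw [← (Equiv.subRight k).tsum_eq (f := f)]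
    rfl
  exact hprod.prod_symm.prod

/-- The `b` of the header; division by zero makes it vanish at `k = 0`. -/
noncomputable def normQuot (q : ℤ → ℂ) (k : ℤ) : ℝ := ‖q k / k‖

/-- The `c` of the header. -/
noncomputable def weightedNorm (s : ℝ) (q : ℤ → ℂ) (k : ℤ) : ℝ :=
  (1 + 2 * |(k : ℝ)|) ^ s * ‖q k‖

theorem memH_iff_summable_weightedNorm_sq {s : ℝ} {q : ℤ → ℂ} :
    memH s q ↔ Summable fun k => weightedNorm s q k ^ 2 := by
  simp only [memH, weightedNorm, mul_pow]

theorem memH_zero_iff {q : ℤ → ℂ} : memH 0 q ↔ Summable fun k => ‖q k‖ ^ 2 := by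
  simp [memH]

theorem memH.mono {σ τ : ℝ} {q : ℤ → ℂ} (hστ : σ ≤ τ) (h : memH τ q) : memH σ q :=
  h.of_nonneg_of_le (fun k => by positivity) fun k => by
    have h1 : (1 : ℝ) ≤ 1 + 2 * |(k : ℝ)| := by linarith [abs_nonneg (k : ℝ)]
    gcongr

theorem normQuot_le_norm (q : ℤ → ℂ) (k : ℤ) : normQuot q k ≤ ‖q k‖ := by
  rcases eq_or_ne k 0 with rfl | hk
  · simp [normQuot]
  · have h1 : (1 : ℝ) ≤ ‖(k : ℂ)‖ := by
      rw [Complex.norm_intCast]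
      exact_mod_cast Int.one_le_abs hk
    exact (norm_div _ _).trans_le (div_le_self (norm_nonneg _) h1)

theorem summable_normQuot_sq {q : ℤ → ℂ} (hq : Summable fun k => ‖q k‖ ^ 2) :
    Summable fun k => normQuot q k ^ 2 :=
  hq.of_nonneg_of_le (fun _ => sq_nonneg _)
    fun k => pow_le_pow_left₀ (norm_nonneg _) (normQuot_le_norm q k) 2

theorem summable_normQuot {q : ℤ → ℂ} (hq : Summable fun k => ‖q k‖ ^ 2) :
    Summable (normQuot q) := by
  have hinv : Summable fun k : ℤ => (1 / |(k : ℝ)|) ^ 2 := by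
    simpa only [div_pow, one_pow, sq_abs] using Real.summable_one_div_int_pow.2 one_lt_two
  refine (hq.mul_of_summable_sq hinv).congr fun k => ?_
  rw [normQuot, norm_div, Complex.norm_intCast, mul_one_div]

theorem norm_rho_summand_eq (q : ℤ → ℂ) (n j : ℤ) :
    ‖if j = n ∨ j = -n then 0
      else q (n - j) * q (n + j) / (((n : ℂ) - (j : ℂ)) * ((n : ℂ) + (j : ℂ)))‖
      = normQuot q (n - j) * normQuot q (n + j) := by
  split_ifs with h
  · rcases h with rfl | rfl <;> simp [normQuot]
  · rw [normQuot, normQuot, ← norm_mul, mul_div_mul_comm]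
    push_cast
    rfl

theorem summable_norm_rho_summand {q : ℤ → ℂ} (hq : Summable fun k => ‖q k‖ ^ 2) (n : ℤ) :
    Summable fun j : ℤ =>
      ‖if j = n ∨ j = -n then 0
        else q (n - j) * q (n + j) / (((n : ℂ) - (j : ℂ)) * ((n : ℂ) + (j : ℂ)))‖ := by
  simp only [norm_rho_summand_eq]
  have hb := summable_normQuot_sq hq
  exact (hb.comp_injective (sub_right_injective (b := n))).mul_of_summable_sq
    (hb.comp_injective (add_right_injective n))

theorem norm_rho_le {q : ℤ → ℂ} (hq : Summable fun k => ‖q k‖ ^ 2) (m : ℤ) :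
    ‖rho q m‖ ≤ intConv (normQuot q) (normQuot q) (2 * m) / Real.pi ^ 2 := by
  have hpi : ‖1 / (Real.pi : ℂ) ^ 2‖ = 1 / Real.pi ^ 2 := by
    rw [norm_div, norm_one, norm_pow, Complex.norm_real, Real.norm_of_nonneg Real.pi_pos.le]
  rw [rho, norm_mul, hpi, ← tsum_mul_shift_eq_intConv, one_div_mul_eq_div]
  gcongr
  refine (norm_tsum_le_tsum_norm (summable_norm_rho_summand hq m)).trans_eq ?_
  exact tsum_congr fun j => norm_rho_summand_eq q m j

theorem one_add_abs_add_rpow_le {p : ℝ} (hp : 0 ≤ p) (x y : ℝ) :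
    (1 + |x + y|) ^ p ≤ (1 + 2 * |x|) ^ p + (1 + 2 * |y|) ^ p := by
  wlog hxy : |y| ≤ |x| generalizing x y
  · rw [add_comm x, add_comm ((1 + 2 * |x|) ^ p)]
    exact this y x (le_of_not_ge hxy)
  calc (1 + |x + y|) ^ p ≤ (1 + 2 * |x|) ^ p := by
        gcongr
        linarith [abs_add_le x y]
    _ ≤ _ := le_add_of_nonneg_right (by positivity)

theorem rpow_mul_normQuot_le (s : ℝ) (q : ℤ → ℂ) (k : ℤ) :
    (1 + 2 * |(k : ℝ)|) ^ (1 + s) * normQuot q k ≤ 3 * weightedNorm s q k := by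
  have hc : 0 ≤ weightedNorm s q k := by unfold weightedNorm; positivity
  rcases eq_or_ne k 0 with rfl | hk
  · simpa [normQuot] using hc
  have hk1 : (1 : ℝ) ≤ |(k : ℝ)| := by exact_mod_cast Int.one_le_abs hk
  calc (1 + 2 * |(k : ℝ)|) ^ (1 + s) * normQuot q k
      = (1 + 2 * |(k : ℝ)|) / |(k : ℝ)| * weightedNorm s q k := by
        rw [Real.rpow_add (by positivity), Real.rpow_one, normQuot, norm_div,
          Complex.norm_intCast, weightedNorm]
        ring
    _ ≤ 3 * weightedNorm s q k := by
        gcongr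
        rw [div_le_iff₀ (by positivity)]
        linarith

theorem rpow_mul_intConv_normQuot_le {s : ℝ} (hs : 0 ≤ 1 + s) {q : ℤ → ℂ}
    (hq : Summable fun k => ‖q k‖ ^ 2) (hc : Summable fun k => weightedNorm s q k ^ 2) (m : ℤ) :
    (1 + 2 * |(m : ℝ)|) ^ (1 + s) * intConv (normQuot q) (normQuot q) (2 * m)
      ≤ 6 * intConv (weightedNorm s q) (normQuot q) (2 * m) := by
  have hb := summable_normQuot_sq hq
  have hpoint (k : ℤ) : (1 + 2 * |(m : ℝ)|) ^ (1 + s) * (normQuot q (2 * m - k) * normQuot q k)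
      ≤ 3 * (weightedNorm s q (2 * m - k) * normQuot q k)
        + 3 * (normQuot q (2 * m - k) * weightedNorm s q k) := by
    have hw := one_add_abs_add_rpow_le hs ((2 * m - k : ℤ) : ℝ) k
    rw [show ((2 * m - k : ℤ) : ℝ) + k = 2 * m by push_cast; ring, abs_mul, abs_two] at hw
    have h1 := rpow_mul_normQuot_le s q (2 * m - k)
    have h2 := rpow_mul_normQuot_le s q k
    have hb1 : 0 ≤ normQuot q (2 * m - k) := norm_nonneg _
    have hb2 : 0 ≤ normQuot q k := norm_nonneg _
    nlinarith [mul_le_mul_of_nonneg_right hw (mul_nonneg hb1 hb2),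
      mul_le_mul_of_nonneg_right h1 hb2, mul_le_mul_of_nonneg_left h2 hb1]
  have hcb := (summable_intConv_summand hc hb (2 * m)).mul_left 3
  have hbc := (summable_intConv_summand hb hc (2 * m)).mul_left 3
  calc (1 + 2 * |(m : ℝ)|) ^ (1 + s) * intConv (normQuot q) (normQuot q) (2 * m)
      ≤ ∑' k, (3 * (weightedNorm s q (2 * m - k) * normQuot q k)
          + 3 * (normQuot q (2 * m - k) * weightedNorm s q k)) := by
        rw [intConv, ← tsum_mul_left]
        exact ((summable_intConv_summand hb hb _).mul_left _).tsum_le_tsum hpoint (hcb.add hbc)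
    _ = 3 * intConv (weightedNorm s q) (normQuot q) (2 * m)
          + 3 * intConv (normQuot q) (weightedNorm s q) (2 * m) := by
        rw [hcb.tsum_add hbc, tsum_mul_left, tsum_mul_left, intConv, intConv]
    _ = 6 * intConv (weightedNorm s q) (normQuot q) (2 * m) := by
        rw [intConv_comm (normQuot q)]
        ring

theorem sq_rpow_mul_norm_rho_le {s : ℝ} (hs : 0 ≤ 1 + s) {q : ℤ → ℂ}
    (hq : Summable fun k => ‖q k‖ ^ 2) (hc : Summable fun k => weightedNorm s q k ^ 2) (m : ℤ) :
    ((1 + 2 * |(m : ℝ)|) ^ (1 + s) * ‖rho q m‖) ^ 2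
      ≤ 36 / Real.pi ^ 4 * (∑' k, normQuot q k)
          * intConv (fun k => weightedNorm s q k ^ 2) (normQuot q) (2 * m) := by
  calc ((1 + 2 * |(m : ℝ)|) ^ (1 + s) * ‖rho q m‖) ^ 2
      ≤ (6 / Real.pi ^ 2 * intConv (weightedNorm s q) (normQuot q) (2 * m)) ^ 2 := by
        refine pow_le_pow_left₀ (by positivity) ?_ 2
        calc (1 + 2 * |(m : ℝ)|) ^ (1 + s) * ‖rho q m‖
            ≤ (1 + 2 * |(m : ℝ)|) ^ (1 + s)
                * (intConv (normQuot q) (normQuot q) (2 * m) / Real.pi ^ 2) := by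
              gcongr
              exact norm_rho_le hq m
          _ ≤ 6 * intConv (weightedNorm s q) (normQuot q) (2 * m) / Real.pi ^ 2 := by
              rw [← mul_div_assoc]
              exact div_le_div_of_nonneg_right (rpow_mul_intConv_normQuot_le hs hq hc m)
                (by positivity)
          _ = _ := by ring
    _ = 36 / Real.pi ^ 4 * intConv (weightedNorm s q) (normQuot q) (2 * m) ^ 2 := by ring
    _ ≤ 36 / Real.pi ^ 4 * ((∑' k, normQuot q k)
          * intConv (fun k => weightedNorm s q k ^ 2) (normQuot q) (2 * m)) := by
        gcongr
        exact sq_intConv_le (fun k => norm_nonneg _) (summable_normQuot hq) hc _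
    _ = _ := by ring

theorem rho_in_h_one_plus_s_general (s : ℝ) (hs : 0 ≤ s) (q : ℤ → ℂ)
    (hq : memH s q) :
    (∀ n : ℤ, 1 ≤ n → Summable fun j : ℤ =>
      ‖(if j = n ∨ j = -n then 0
        else q (n - j) * q (n + j) / (((n : ℂ) - (j : ℂ)) * ((n : ℂ) + (j : ℂ))))‖) ∧
    Summable (fun n : ℕ =>
      ((1 + 2 * ((n : ℝ) + 1)) ^ (2 * (1 + s))) * ‖rho q ((n : ℤ) + 1)‖ ^ 2) := by
  have hq2 : Summable fun k => ‖q k‖ ^ 2 := memH_zero_iff.1 (hq.mono hs)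
  have hc := memH_iff_summable_weightedNorm_sq.1 hq
  refine ⟨fun n _ => summable_norm_rho_summand hq2 n, ?_⟩
  have hconv : Summable (intConv (fun k => weightedNorm s q k ^ 2) (normQuot q)) :=
    summable_intConv (fun _ => sq_nonneg _) (fun _ => norm_nonneg _) hc (summable_normQuot hq2)
  have hinj : Function.Injective fun n : ℕ => 2 * ((n : ℤ) + 1) := fun a b h => by
    simp only at h
    omega
  refine Summable.of_nonneg_of_le (fun n => by positivity) (fun n => ?_)
    ((hconv.comp_injective hinj).mul_left (36 / Real.pi ^ 4 * ∑' k, normQuot q k))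
  have hweight : (1 + 2 * ((n : ℝ) + 1)) ^ (2 * (1 + s)) * ‖rho q ((n : ℤ) + 1)‖ ^ 2
      = ((1 + 2 * |(((n : ℤ) + 1 : ℤ) : ℝ)|) ^ (1 + s) * ‖rho q ((n : ℤ) + 1)‖) ^ 2 := by
    have hcast : |(((n : ℤ) + 1 : ℤ) : ℝ)| = (n : ℝ) + 1 := by
      push_cast
      exact abs_of_nonneg (by positivity)
    rw [hcast, mul_pow, mul_comm 2 (1 + s), Real.rpow_mul (by positivity), Real.rpow_two]
  rw [hweight]
  exact sq_rpow_mul_norm_rho_le (by linarith) hq2 hc _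

/-- The correction terms `ϱ(n)` form a sequence in `h^{1+s}(ℕ)`. -/
theorem rho_in_h_one_plus_s (s : ℝ) (hs : 0 ≤ s) (q : ℤ → ℂ) (hq0 : q 0 = 0)
    (hq : memH s q) :
    (∀ n : ℤ, 1 ≤ n → Summable fun j : ℤ =>
      ‖(if j = n ∨ j = -n then 0
        else q (n - j) * q (n + j) / (((n : ℂ) - (j : ℂ)) * ((n : ℂ) + (j : ℂ))))‖) ∧
    Summable (fun n : ℕ =>
      ((1 + 2 * ((n : ℝ) + 1)) ^ (2 * (1 + s))) * ‖rho q ((n : ℤ) + 1)‖ ^ 2) :=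
  rho_in_h_one_plus_s_general s hs q hq
end

section
/- Let s ≥ 0 and define the weight ω(k) = k^s·log(1+k) if k is even and ω(k) = k^s if k is odd. Then ω satisfies k^s ≤ ω(k) ≤ C·k^{s+1} for all k ∈ ℕ (indeed ω has logarithmic order s: log ω(k)/log k → s), but ω is not equivalent to any monotone weight; i.e., there is no nondecreasing function μ : ℕ → (0,∞) and constants c, C > 0 with c·μ(k) ≤ ω(k) ≤ C·μ(k) for all k ∈ ℕ. -/
open scoped BigOperators

/-- The weight `ω(k) = k^s log(1+k)` for even `k`, `ω(k) = k^s` for odd `k`. -/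
noncomputable def oddEvenWeight (s : ℝ) (k : ℕ) : ℝ :=
  if Even k then (k : ℝ) ^ s * Real.log (1 + (k : ℝ)) else (k : ℝ) ^ s

open Real Filter Topology

/-!
On odd integers `ω(k) = k^s`, while on even integers the factor `log (1 + k)` sits on top of `k^s`;
since `log` grows slower than any power this changes neither the logarithmic order nor the
polynomial bounds. A weight equivalent to a monotone one is almost increasing, `ω j ≤ A ω k` for
`j ≤ k`, but the ratio `ω k / ω (k + 1) ≥ 2^{-s} log (1 + k)` at even `k` is unbounded.
-/

def AlmostMonotone (ω : ℕ → ℝ) : Prop :=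
  ∃ A : ℝ, ∀ j k : ℕ, 1 ≤ j → j ≤ k → ω j ≤ A * ω k

theorem AlmostMonotone.of_equiv_monotone {ω μ : ℕ → ℝ} (hμ : Monotone μ) {c C : ℝ}
    (hc : 0 < c) (hC : 0 ≤ C)
    (h : ∀ k : ℕ, 1 ≤ k → c * μ k ≤ ω k ∧ ω k ≤ C * μ k) :
    AlmostMonotone ω := by
  refine ⟨C / c, fun j k hj hjk => ?_⟩
  calc ω j ≤ C * μ j := (h j hj).2
    _ ≤ C * μ k := by gcongr; exact hμ hjk
    _ ≤ C * (ω k / c) := by gcongr; rw [le_div_iff₀ hc, mul_comm]; exact (h k (hj.trans hjk)).1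
    _ = C / c * ω k := by ring

theorem two_le_of_even_of_one_le {k : ℕ} (hk : 1 ≤ k) (he : Even k) : (2 : ℝ) ≤ k := by
  obtain ⟨m, rfl⟩ := he
  norm_cast
  omega

theorem one_le_log_one_add {x : ℝ} (hx : 2 ≤ x) : 1 ≤ log (1 + x) := by
  rw [le_log_iff_exp_le (by linarith)]
  linarith [exp_one_lt_d9]

theorem log_one_add_le_two_mul_log {x : ℝ} (hx : 2 ≤ x) : log (1 + x) ≤ 2 * log x := by
  rw [← log_rpow (by linarith)]
  exact log_le_log (by linarith) (by norm_cast; nlinarith)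

theorem log_log_one_add_div_log_le {x : ℝ} (hx : 2 ≤ x) :
    log (log (1 + x)) / log x ≤ 2 * (log (log (1 + x)) / log (1 + x)) := by
  have hlog : 0 < log x := log_pos (by linarith)
  have hL := one_le_log_one_add hx
  have hratio : 0 ≤ log (log (1 + x)) / log (1 + x) :=
    div_nonneg (log_nonneg hL) (by linarith)
  calc log (log (1 + x)) / log x
      = log (log (1 + x)) / log (1 + x) * (log (1 + x) / log x) := by
        field_simp
    _ ≤ log (log (1 + x)) / log (1 + x) * 2 := by
        gcongr; exact (div_le_iff₀ hlog).2 (log_one_add_le_two_mul_log hx)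
    _ = 2 * (log (log (1 + x)) / log (1 + x)) := mul_comm _ _

theorem tendsto_log_log_one_add_div_log_one_add :
    Tendsto (fun x : ℝ => log (log (1 + x)) / log (1 + x)) atTop (𝓝 0) :=
  isLittleO_log_id_atTop.tendsto_div_nhds_zero.comp
    (tendsto_log_atTop.comp (tendsto_atTop_add_const_left _ 1 tendsto_id))

namespace oddEvenWeight

theorem of_even {s : ℝ} {k : ℕ} (hk : Even k) :
    oddEvenWeight s k = (k : ℝ) ^ s * log (1 + k) := if_pos hk

theorem of_odd {s : ℝ} {k : ℕ} (hk : ¬Even k) : oddEvenWeight s k = (k : ℝ) ^ s := if_neg hk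

theorem rpow_le (s : ℝ) {k : ℕ} (hk : 1 ≤ k) : (k : ℝ) ^ s ≤ oddEvenWeight s k := by
  by_cases he : Even k
  · rw [of_even he]
    exact le_mul_of_one_le_right (by positivity)
      (one_le_log_one_add (two_le_of_even_of_one_le hk he))
  · rw [of_odd he]

theorem pos (s : ℝ) {k : ℕ} (hk : 1 ≤ k) : 0 < oddEvenWeight s k :=
  (rpow_pos_of_pos (by exact_mod_cast hk) s).trans_le (rpow_le s hk)

theorem le_rpow_add_one (s : ℝ) {k : ℕ} (hk : 1 ≤ k) :
    oddEvenWeight s k ≤ (k : ℝ) ^ (s + 1) := by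
  have hk' : (1 : ℝ) ≤ k := by exact_mod_cast hk
  rw [rpow_add_one (by positivity)]
  by_cases he : Even k
  · rw [of_even he]
    gcongr
    linarith [log_le_sub_one_of_pos (x := 1 + k) (by linarith)]
  · rw [of_odd he]
    exact le_mul_of_one_le_right (by positivity) hk'

theorem log_eq (s : ℝ) {k : ℕ} (hk : 1 ≤ k) :
    log (oddEvenWeight s k) = s * log k + if Even k then log (log (1 + k)) else 0 := by
  have hk' : (0 : ℝ) < k := by exact_mod_cast hk
  by_cases he : Even k
  · have hL := one_le_log_one_add (two_le_of_even_of_one_le hk he)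
    rw [of_even he, log_mul (by positivity) (by positivity), log_rpow hk', if_pos he]
  · rw [of_odd he, log_rpow hk', if_neg he, add_zero]

theorem log_div_log_mem_Icc (s : ℝ) {k : ℕ} (hk : 2 ≤ k) :
    log (oddEvenWeight s k) / log k ∈ Set.Icc s (s + 2 * (log (log (1 + k)) / log (1 + k))) := by
  have hk2 : (2 : ℝ) ≤ k := by exact_mod_cast hk
  have hlog : 0 < log (k : ℝ) := log_pos (by linarith)
  have hL := one_le_log_one_add hk2
  have hratio : 0 ≤ log (log (1 + k)) / log (1 + k) := div_nonneg (log_nonneg hL) (by linarith)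
  rw [log_eq s (by omega), add_div, mul_div_cancel_right₀ _ hlog.ne']
  split_ifs
  · exact ⟨le_add_of_nonneg_right (div_nonneg (log_nonneg hL) hlog.le),
      by grw [log_log_one_add_div_log_le hk2]⟩
  · rw [zero_div, add_zero]
    exact ⟨le_rfl, by linarith⟩

theorem tendsto_log_div_log (s : ℝ) :
    Tendsto (fun k : ℕ => log (oddEvenWeight s k) / log k) atTop (𝓝 s) := by
  have hupper : Tendsto (fun k : ℕ => s + 2 * (log (log (1 + k)) / log (1 + k))) atTop
      (𝓝 (s + 2 * 0)) :=
    tendsto_const_nhds.add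
      ((tendsto_log_log_one_add_div_log_one_add.comp tendsto_natCast_atTop_atTop).const_mul 2)
  rw [mul_zero, add_zero] at hupper
  have hmem := (eventually_ge_atTop 2).mono fun k hk => log_div_log_mem_Icc s hk
  exact tendsto_of_tendsto_of_tendsto_of_le_of_le' tendsto_const_nhds hupper
    (hmem.mono fun _ hk => hk.1) (hmem.mono fun _ hk => hk.2)

theorem succ_mul_log_le {s : ℝ} (hs : 0 ≤ s) {k : ℕ} (hk : 1 ≤ k) (he : Even k) :
    oddEvenWeight s (k + 1) * log (1 + k) ≤ 2 ^ s * oddEvenWeight s k := by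
  have hk2 := two_le_of_even_of_one_le hk he
  rw [of_odd (Nat.not_even_iff_odd.mpr he.add_one), of_even he, ← mul_assoc,
    ← mul_rpow zero_le_two (by positivity)]
  gcongr
  · linarith [one_le_log_one_add hk2]
  · push_cast
    linarith

theorem not_almostMonotone {s : ℝ} (hs : 0 ≤ s) : ¬AlmostMonotone (oddEvenWeight s) := by
  rintro ⟨A, hA⟩
  have hbounded : ∀ n : ℕ, 1 ≤ n → log (1 + (2 * n : ℕ)) ≤ 2 ^ s * A := by
    intro n hn
    have hk : 1 ≤ 2 * n := by omega
    have hpos := pos s (hk.trans (Nat.le_succ _))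
    refine le_of_mul_le_mul_left ?_ hpos
    calc oddEvenWeight s (2 * n + 1) * log (1 + (2 * n : ℕ))
        ≤ 2 ^ s * oddEvenWeight s (2 * n) := succ_mul_log_le hs hk (even_two_mul n)
      _ ≤ 2 ^ s * (A * oddEvenWeight s (2 * n + 1)) := by
          gcongr; exact hA _ _ hk (Nat.le_succ _)
      _ = oddEvenWeight s (2 * n + 1) * (2 ^ s * A) := by ring
  have hunbounded : Tendsto (fun n : ℕ => log (1 + (2 * n : ℕ))) atTop atTop :=
    tendsto_log_atTop.comp (tendsto_atTop_add_const_left _ 1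
      (tendsto_natCast_atTop_atTop.comp (tendsto_id.const_mul_atTop' two_pos)))
  obtain ⟨n, hn, hlarge⟩ :=
    ((eventually_ge_atTop 1).and (hunbounded.eventually_gt_atTop (2 ^ s * A))).exists
  exact (hbounded n hn).not_gt hlarge

end oddEvenWeight

/-- The weight of Example 1: it has logarithmic order `s` and satisfies
`k^s ≤ ω(k) ≤ C k^{s+1}`, but it is not equivalent to any monotone weight. -/
theorem weight_not_equivalent_to_monotone (s : ℝ) (hs : 0 ≤ s) :
    (∃ C : ℝ, 0 < C ∧ ∀ k : ℕ, 1 ≤ k →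
      (k : ℝ) ^ s ≤ oddEvenWeight s k ∧ oddEvenWeight s k ≤ C * (k : ℝ) ^ (s + 1)) ∧
    Filter.Tendsto (fun k : ℕ => Real.log (oddEvenWeight s k) / Real.log (k : ℝ))
      Filter.atTop (nhds s) ∧
    ¬ ∃ μ : ℕ → ℝ, (∀ k, 0 < μ k) ∧ Monotone μ ∧
        ∃ c C : ℝ, 0 < c ∧ 0 < C ∧ ∀ k : ℕ, 1 ≤ k →
          c * μ k ≤ oddEvenWeight s k ∧ oddEvenWeight s k ≤ C * μ k := by
  refine ⟨⟨1, one_pos, fun k hk => ⟨oddEvenWeight.rpow_le s hk, ?_⟩⟩,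
    oddEvenWeight.tendsto_log_div_log s, ?_⟩
  · rw [one_mul]
    exact oddEvenWeight.le_rpow_add_one s hk
  · rintro ⟨μ, -, hμ, c, C, hc, hC, hbound⟩
    exact oddEvenWeight.not_almostMonotone hs (.of_equiv_monotone hμ hc hC.le hbound)
end

section
/- Let ω : ℕ → (0,∞) satisfy k^s ≪ ω(k) ≪ k^{1+s} for some s ≥ 0. Suppose: (i) for every q ∈ H^s(𝕋,ℝ) the gap lengths satisfy γ_q(n) = 2|q̂(n)| + r_q(n) with {r_q(n)} ∈ h^{1+s}(ℕ); and (ii) for every q ∈ L²(𝕋,ℝ), {γ_q(n)} ∈ h^{s}(ℕ) implies q ∈ H^{s}(𝕋,ℝ). Then for every q ∈ L²(𝕋,ℝ): q ∈ H^{ω}(𝕋,ℝ) if and only if {γ_q(n)} ∈ h^{ω}(ℕ). -/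
/-!
Since `k^s ≪ ω(k) ≪ k^{1+s}`, membership in `h^ω` implies membership in `h^s` and is implied by
membership in `h^{1+s}`. Hence for `q ∈ H^ω` (resp. `γ_q ∈ h^ω`, via (ii)) we get `q ∈ H^s`, so (i)
applies and its remainder `r_q ∈ h^{1+s} ⊆ h^ω`. Then `γ_q = 2|q̂| + r_q` and `|q̂| = (γ_q - r_q)/2`
transfer `h^ω`-membership in both directions, `h^ω` being a linear space.
-/

open Asymptotics Filter

/-- `a ∈ h^w(ℕ)`. -/
def WeightedSqSummable (w a : ℕ → ℝ) : Prop :=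
  Summable fun n => w n ^ 2 * a n ^ 2

namespace WeightedSqSummable

variable {w v a b : ℕ → ℝ}

lemma of_isBigO (hwv : w =O[atTop] v) (h : WeightedSqSummable v a) : WeightedSqSummable w a :=
  summable_of_isBigO_nat h ((hwv.pow 2).mul (isBigO_refl (fun n => a n ^ 2) _))

lemma const_mul (c : ℝ) (h : WeightedSqSummable w a) : WeightedSqSummable w fun n => c * a n := by
  simpa only [WeightedSqSummable, mul_pow, mul_left_comm] using h.mul_left (c ^ 2)

lemma add (ha : WeightedSqSummable w a) (hb : WeightedSqSummable w b) :
    WeightedSqSummable w fun n => a n + b n := by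
  refine ((Summable.add ha hb).mul_left 2).of_nonneg_of_le (fun n => by positivity) fun n => ?_
  calc w n ^ 2 * (a n + b n) ^ 2 ≤ w n ^ 2 * (2 * (a n ^ 2 + b n ^ 2)) := by gcongr; exact add_sq_le
    _ = 2 * (w n ^ 2 * a n ^ 2 + w n ^ 2 * b n ^ 2) := by ring

end WeightedSqSummable

lemma one_add_two_mul_isTheta_natCast :
    (fun n : ℕ => 1 + 2 * (n : ℝ)) =Θ[atTop] fun n => (n : ℝ) := by
  refine ⟨.of_bound 3 ?_, .of_bound 1 (.of_forall fun n => ?_)⟩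
  · filter_upwards [eventually_ge_atTop 1] with n hn
    have : (1 : ℝ) ≤ n := by exact_mod_cast hn
    rw [Real.norm_of_nonneg (by positivity), Real.norm_of_nonneg (by positivity)]
    linarith
  · rw [Real.norm_of_nonneg (by positivity), Real.norm_of_nonneg (by positivity)]
    linarith

lemma one_add_two_mul_rpow_isTheta (r : ℝ) :
    (fun n : ℕ => (1 + 2 * (n : ℝ)) ^ r) =Θ[atTop] fun n => (n : ℝ) ^ r :=
  one_add_two_mul_isTheta_natCast.rpow (.of_forall fun _ => by positivity)
    (.of_forall fun _ => by positivity)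

/-- `Q` models the potentials `q ∈ L²(𝕋,ℝ)`, `qhat q` their one-sided Fourier coefficients and
`γ q` their gap lengths. -/
theorem main_equivalence_general (s : ℝ) (ω : ℕ → ℝ)
    (c₁ c₂ : ℝ) (hc₁ : 0 < c₁)
    (hωlow : ∀ k : ℕ, 1 ≤ k → c₁ * (k : ℝ) ^ s ≤ ω k)
    (hωup : ∀ k : ℕ, 1 ≤ k → ω k ≤ c₂ * (k : ℝ) ^ (1 + s))
    (Q : Type*) (qhat : Q → ℕ → ℂ) (γ : Q → ℕ → ℝ)
    (hyp1 : ∀ q : Q,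
      Summable (fun k : ℕ => ((1 + 2 * (k : ℝ)) ^ s) ^ 2 * ‖qhat q k‖ ^ 2) →
      ∃ rq : ℕ → ℝ, (∀ n, γ q n = 2 * ‖qhat q n‖ + rq n) ∧
        Summable (fun n : ℕ => ((1 + 2 * (n : ℝ)) ^ (1 + s)) ^ 2 * (rq n) ^ 2))
    (hyp2 : ∀ q : Q,
      Summable (fun n : ℕ => ((1 + 2 * (n : ℝ)) ^ s) ^ 2 * (γ q n) ^ 2) →
      Summable (fun k : ℕ => ((1 + 2 * (k : ℝ)) ^ s) ^ 2 * ‖qhat q k‖ ^ 2)) :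
    ∀ q : Q,
      Summable (fun k : ℕ => (ω k) ^ 2 * ‖qhat q k‖ ^ 2) ↔
      Summable (fun n : ℕ => (ω n) ^ 2 * (γ q n) ^ 2) := by
  have hlow : (fun k : ℕ => (1 + 2 * (k : ℝ)) ^ s) =O[atTop] ω := by
    refine (one_add_two_mul_rpow_isTheta s).isBigO.trans (.of_bound c₁⁻¹ ?_)
    filter_upwards [eventually_ge_atTop 1] with k hk
    rw [Real.norm_of_nonneg (by positivity), le_inv_mul_iff₀ hc₁]
    exact (hωlow k hk).trans (Real.le_norm_self _)
  have hup : ω =O[atTop] fun k : ℕ => (1 + 2 * (k : ℝ)) ^ (1 + s) := by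
    refine IsBigO.trans (.of_bound ‖c₂‖ ?_) (one_add_two_mul_rpow_isTheta (1 + s)).symm.isBigO
    filter_upwards [eventually_ge_atTop 1] with k hk
    have hω : 0 ≤ ω k := le_trans (by positivity) (hωlow k hk)
    rw [Real.norm_of_nonneg hω, ← norm_mul]
    exact (hωup k hk).trans (Real.le_norm_self _)
  intro q
  constructor
  · intro hq
    obtain ⟨r, hγr, hr⟩ := hyp1 q (WeightedSqSummable.of_isBigO hlow hq)
    simp_rw [hγr]
    exact (WeightedSqSummable.const_mul 2 hq).add (.of_isBigO hup hr)
  · intro (hγ : WeightedSqSummable ω (γ q))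
    obtain ⟨r, hγr, hr⟩ := hyp1 q (hyp2 q (WeightedSqSummable.of_isBigO hlow hγ))
    have hqhat : (fun n => ‖qhat q n‖) = fun n => 2⁻¹ * (γ q n + -1 * r n) := by
      funext n; rw [hγr]; ring
    change WeightedSqSummable ω (fun n => ‖qhat q n‖)
    rw [hqhat]
    exact (hγ.add ((WeightedSqSummable.of_isBigO hup hr).const_mul (-1))).const_mul 2⁻¹

/-- Abstract form of the key equivalence `q ∈ H^ω(𝕋,ℝ) ↔ {γ_q(n)} ∈ h^ω(ℕ)` for weights
with `k^s ≪ ω(k) ≪ k^{1+s}`. Here `Q` is the set of potentials `q ∈ L²(𝕋,ℝ)`,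
`qhat q` the (one-sided) Fourier coefficient sequence of `q`, and `γ q` the gap-length
sequence; hypothesis (i) is the asymptotic formula `γ_q(n) = 2|q̂(n)| + h^{1+s}(n)` and
hypothesis (ii) is the inverse implication `{γ_q} ∈ h^s ⇒ q ∈ H^s`. -/
theorem main_equivalence (s : ℝ) (hs : 0 ≤ s) (ω : ℕ → ℝ) (hωpos : ∀ k, 0 < ω k)
    (c₁ c₂ : ℝ) (hc₁ : 0 < c₁) (hc₂ : 0 < c₂)
    (hωlow : ∀ k : ℕ, 1 ≤ k → c₁ * (k : ℝ) ^ s ≤ ω k)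
    (hωup : ∀ k : ℕ, 1 ≤ k → ω k ≤ c₂ * (k : ℝ) ^ (1 + s))
    (Q : Type*) (qhat : Q → ℕ → ℂ) (γ : Q → ℕ → ℝ) (hγ : ∀ q n, 0 ≤ γ q n)
    (hyp1 : ∀ q : Q,
      Summable (fun k : ℕ => ((1 + 2 * (k : ℝ)) ^ s) ^ 2 * ‖qhat q k‖ ^ 2) →
      ∃ rq : ℕ → ℝ, (∀ n, γ q n = 2 * ‖qhat q n‖ + rq n) ∧
        Summable (fun n : ℕ => ((1 + 2 * (n : ℝ)) ^ (1 + s)) ^ 2 * (rq n) ^ 2))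
    (hyp2 : ∀ q : Q,
      Summable (fun n : ℕ => ((1 + 2 * (n : ℝ)) ^ s) ^ 2 * (γ q n) ^ 2) →
      Summable (fun k : ℕ => ((1 + 2 * (k : ℝ)) ^ s) ^ 2 * ‖qhat q k‖ ^ 2)) :
    ∀ q : Q,
      Summable (fun k : ℕ => (ω k) ^ 2 * ‖qhat q k‖ ^ 2) ↔
      Summable (fun n : ℕ => (ω n) ^ 2 * (γ q n) ^ 2) :=
  main_equivalence_general s ω c₁ c₂ hc₁ hωlow hωup Q qhat γ hyp1 hyp2
end
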